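/- arXiv:1307.6626 — 10 statements merged into one kernel-verified Lean document; each statement's English description precedes it below -/
import Mathlib

section
/- For an odd prime p, an integer w with 1 ≤ w < p, integers u ≥ 0 with gcd(u,p)=1 and l ≥ 0, the polynomial quotient satisfies q_{p,w}(u + l·p) ≡ q_{p,w}(u) + w·l·u^{w-1} (mod p). -/
/-- The polynomial quotient `q_{p,w}(u)`: the unique integer in `[0, p-1]`
congruent to `(u^w - u^{wp})/p` modulo `p`. -/
def polyQuot (p w u : ℕ) : ℕ := ((((u : ℤ) ^ w - (u : ℤ) ^ (w * p)) / (p : ℤ)) % (p : ℤ)).toNat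

/-- Binomial expansion to first order: `(x+m)^w ≡ x^w + w x^(w-1) m [ZMOD m^2]`. -/
lemma binom_aux (x m : ℤ) (w : ℕ) (hw : 1 ≤ w) :
    (x + m) ^ w ≡ x ^ w + w * x ^ (w - 1) * m [ZMOD m ^ 2] := by
  induction w with
  | zero => omega
  | succ n ih =>
    rcases Nat.lt_or_ge 1 (n + 1) with h | h
    · have hn : 1 ≤ n := by omega
      have ih' := ih hn
      have hx : x ^ (n - 1) * x = x ^ n := by
        rw [← pow_succ, Nat.sub_add_cancel hn]
      calc (x + m) ^ (n + 1) = (x + m) ^ n * (x + m) := by ring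
        _ ≡ (x ^ n + n * x ^ (n - 1) * m) * (x + m) [ZMOD m ^ 2] := ih'.mul_right _
        _ ≡ x ^ (n + 1) + (↑(n + 1)) * x ^ (n + 1 - 1) * m [ZMOD m ^ 2] := by
            have key : (x ^ n + n * x ^ (n - 1) * m) * (x + m)
                = x ^ (n + 1) + (↑(n + 1)) * x ^ (n + 1 - 1) * m
                  + (n * x ^ (n - 1)) * m ^ 2 := by
              simp only [Nat.add_sub_cancel]
              rw [pow_succ, ← hx]; push_cast; ring
            rw [key]
            exact (Int.modEq_iff_dvd.mpr ⟨-(n * x ^ (n - 1)), by ring⟩)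
    · obtain rfl : n = 0 := by omega
      simp

theorem stmt_0 (p w u l : ℕ) (hp : p.Prime) (hodd : Odd p)
    (hw1 : 1 ≤ w) (hwp : w < p) (hu : Nat.gcd u p = 1) :
    polyQuot p w (u + l * p) ≡ polyQuot p w u + w * l * u ^ (w - 1) [MOD p] := by
  haveI : Fact p.Prime := ⟨hp⟩
  have hp0 : (0:ℤ) < (p:ℤ) := by exact_mod_cast hp.pos
  set x : ℤ := (u : ℤ) with hxdef
  set m : ℤ := (l : ℤ) * p with hmdef
  set N0 : ℤ := x ^ w - x ^ (w * p) with hN0def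
  set N1 : ℤ := (x + m) ^ w - (x + m) ^ (w * p) with hN1def
  -- p divides both numerators (Fermat)
  have fermat : ∀ a : ℤ, (p:ℤ) ∣ a ^ w - a ^ (w * p) := by
    intro a
    have : ((a ^ w - a ^ (w * p) : ℤ) : ZMod p) = 0 := by
      push_cast
      rw [mul_comm w p, pow_mul, ZMod.pow_card]
      ring
    exact (ZMod.intCast_zmod_eq_zero_iff_dvd _ _).mp this
  have hN0 : (p:ℤ) ∣ N0 := fermat x
  have hN1 : (p:ℤ) ∣ N1 := fermat (x + m)
  -- (x+m)^(wp) ≡ x^(wp) mod p^2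
  have hfrob : (p:ℤ) ^ 2 ∣ (x + m) ^ (w * p) - x ^ (w * p) := by
    have h1 : (p:ℤ) ^ 2 ∣ (x + m) ^ p - x ^ p := by
      have := dvd_sub_pow_of_dvd_sub (p := p) (a := x + m) (b := x)
        (by simp [hmdef]) 1
      simpa using this
    have h2 : ((x + m) ^ p - x ^ p) ∣ ((x + m) ^ p) ^ w - (x ^ p) ^ w :=
      sub_dvd_pow_sub_pow _ _ w
    rw [mul_comm w p, pow_mul, pow_mul]
    exact h1.trans h2
  -- (x+m)^w ≡ x^w + w x^(w-1) m mod p^2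
  have hbin : (p:ℤ) ^ 2 ∣ (x + m) ^ w - (x ^ w + w * x ^ (w - 1) * m) := by
    have := (binom_aux x m w hw1).symm
    have hd : (p:ℤ) ^ 2 ∣ m ^ 2 := ⟨(l:ℤ)^2, by rw [hmdef]; ring⟩
    have := (Int.ModEq.of_dvd hd this)
    exact Int.modEq_iff_dvd.mp this
  -- hence N1 - N0 - p * (w*l*x^(w-1)) is divisible by p^2
  have hkey : (p:ℤ) ^ 2 ∣ N1 - N0 - (p:ℤ) * (w * l * x ^ (w - 1)) := by
    have : N1 - N0 - (p:ℤ) * (w * l * x ^ (w - 1))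
        = ((x + m) ^ w - (x ^ w + w * x ^ (w - 1) * m))
          - ((x + m) ^ (w * p) - x ^ (w * p)) := by
      rw [hN1def, hN0def, hmdef]; ring
    rw [this]
    exact dvd_sub hbin hfrob
  obtain ⟨k, hk⟩ := hkey
  obtain ⟨q0, hq0⟩ := hN0
  -- N1 / p = N0 / p + w*l*x^(w-1) + p*k
  have hN1eq : N1 = (p:ℤ) * (q0 + w * l * x ^ (w - 1) + p * k) := by
    have : N1 = N0 + (p:ℤ) * (w * l * x ^ (w - 1)) + (p:ℤ)^2 * k := by linarith [hk]
    rw [this, hq0]; ring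
  have hdiv1 : N1 / (p:ℤ) = q0 + w * l * x ^ (w - 1) + p * k := by
    rw [hN1eq, Int.mul_ediv_cancel_left _ (ne_of_gt hp0)]
  have hdiv0 : N0 / (p:ℤ) = q0 := by
    rw [hq0, Int.mul_ediv_cancel_left _ (ne_of_gt hp0)]
  -- quotient congruence mod p
  have hq : N1 / (p:ℤ) ≡ N0 / (p:ℤ) + w * l * x ^ (w - 1) [ZMOD (p:ℤ)] := by
    rw [hdiv1, hdiv0]
    exact Int.modEq_iff_dvd.mpr ⟨-k, by ring⟩
  -- now translate to the statement
  rw [Nat.modEq_iff_dvd]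
  have hcast1 : ((polyQuot p w (u + l * p) : ℕ) : ℤ) = (N1 / (p:ℤ)) % (p:ℤ) := by
    rw [polyQuot, Int.toNat_of_nonneg (Int.emod_nonneg _ (ne_of_gt hp0))]
    have hc : ((u + l * p : ℕ) : ℤ) = x + m := by push_cast [hxdef, hmdef]; ring
    rw [hc, ← hN1def]
  have hcast0 : ((polyQuot p w u : ℕ) : ℤ) = (N0 / (p:ℤ)) % (p:ℤ) := by
    rw [polyQuot, Int.toNat_of_nonneg (Int.emod_nonneg _ (ne_of_gt hp0))]
  have h2 : (N1 / (p:ℤ)) % (p:ℤ) ≡ (N0 / (p:ℤ)) % (p:ℤ) + w * l * x ^ (w - 1) [ZMOD (p:ℤ)] := by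
    calc (N1 / (p:ℤ)) % (p:ℤ) ≡ N1 / (p:ℤ) [ZMOD (p:ℤ)] := Int.emod_emod_of_dvd _ dvd_rfl
      _ ≡ N0 / (p:ℤ) + w * l * x ^ (w - 1) [ZMOD (p:ℤ)] := hq
      _ ≡ (N0 / (p:ℤ)) % (p:ℤ) + w * l * x ^ (w - 1) [ZMOD (p:ℤ)] :=
          Int.ModEq.add_right _ (Int.emod_emod_of_dvd _ dvd_rfl).symm
  push_cast
  rw [hcast1, hcast0, ← hxdef]
  exact Int.modEq_iff_dvd.mp h2
end

section
/- For an odd prime p, 1 ≤ w < p, and u ≥ 0 with gcd(u,p)=1, the relation q_{p,w}(u) ≡ −u^w · w · q_p(u) (mod p) holds, where q_p is the Fermat quotient. -/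
/-- The Fermat quotient `q_p(u)`. -/
def fermatQuot (p u : ℕ) : ℕ := ((((u : ℤ) ^ (p - 1) - 1) / (p : ℤ)) % (p : ℤ)).toNat

lemma one_add_pow_aux (x : ℤ) : ∀ w : ℕ, ∃ C : ℤ, (1 + x) ^ w = 1 + w * x + x ^ 2 * C := by
  intro w
  induction w with
  | zero => exact ⟨0, by ring⟩
  | succ n ih =>
    obtain ⟨C, hC⟩ := ih
    refine ⟨C + n + x * C, ?_⟩
    rw [pow_succ, hC]
    push_cast
    ring

theorem stmt_2 (p w u : ℕ) (hp : p.Prime) (hodd : Odd p)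
    (hw1 : 1 ≤ w) (hwp : w < p) (hu : Nat.gcd u p = 1) :
    (polyQuot p w u : ℤ) ≡ -(u : ℤ) ^ w * (w : ℤ) * (fermatQuot p u : ℤ) [ZMOD (p : ℤ)] := by
  have hp0 : (p : ℤ) ≠ 0 := by exact_mod_cast hp.pos.ne'
  -- Fermat's little theorem : p ∣ u^(p-1) - 1
  have hndvd : ¬ p ∣ u :=
    (Nat.Prime.coprime_iff_not_dvd hp).mp (Nat.coprime_comm.mp hu)
  have huz : ((u : ℕ) : ZMod p) ≠ 0 := by
    rwa [Ne, ZMod.natCast_eq_zero_iff]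
  haveI : Fact p.Prime := ⟨hp⟩
  have hferm : (p : ℤ) ∣ (u : ℤ) ^ (p - 1) - 1 := by
    rw [← ZMod.intCast_zmod_eq_zero_iff_dvd]
    push_cast
    rw [ZMod.pow_card_sub_one_eq_one huz]
    ring
  obtain ⟨F, hF⟩ := hferm
  obtain ⟨C, hC⟩ := one_add_pow_aux ((p : ℤ) * F) w
  obtain ⟨k, hk⟩ : ∃ k, p = k + 1 := ⟨p - 1, (Nat.succ_pred_eq_of_pos hp.pos).symm⟩
  have hwp' : w * p = w * (p - 1) + w := by
    subst hk; simp only [Nat.add_sub_cancel]; ring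
  have hX : (u : ℤ) ^ w - (u : ℤ) ^ (w * p)
      = (p : ℤ) * (-(u : ℤ) ^ w * ((w : ℤ) * F + (p : ℤ) * F ^ 2 * C)) := by
    rw [hwp', pow_add, mul_comm w (p - 1), pow_mul]
    have h1 : (u : ℤ) ^ (p - 1) = 1 + (p : ℤ) * F := by linarith [hF]
    rw [h1, hC]
    ring
  have hFq : ((fermatQuot p u : ℕ) : ℤ) = F % p := by
    unfold fermatQuot
    rw [Int.toNat_of_nonneg (Int.emod_nonneg _ hp0)]
    congr 1
    rw [hF, Int.mul_ediv_cancel_left _ hp0]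
  have hPq : ((polyQuot p w u : ℕ) : ℤ)
      = (-(u : ℤ) ^ w * ((w : ℤ) * F + (p : ℤ) * F ^ 2 * C)) % p := by
    unfold polyQuot
    rw [Int.toNat_of_nonneg (Int.emod_nonneg _ hp0)]
    congr 1
    rw [hX, Int.mul_ediv_cancel_left _ hp0]
  rw [hPq, hFq]
  calc (-(u : ℤ) ^ w * ((w : ℤ) * F + (p : ℤ) * F ^ 2 * C)) % p
      ≡ -(u : ℤ) ^ w * ((w : ℤ) * F + (p : ℤ) * F ^ 2 * C) [ZMOD (p : ℤ)] :=
        Int.emod_emod_of_dvd _ dvd_rfl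
    _ ≡ -(u : ℤ) ^ w * (w : ℤ) * F [ZMOD (p : ℤ)] :=
        Int.ModEq.symm (Int.modEq_iff_dvd.2 ⟨-(u : ℤ) ^ w * F ^ 2 * C, by ring⟩)
    _ ≡ -(u : ℤ) ^ w * (w : ℤ) * (F % p) [ZMOD (p : ℤ)] :=
        Int.ModEq.mul_left _ (Int.emod_emod_of_dvd _ dvd_rfl).symm
end

section
/- For an odd prime p, 1 ≤ w < p, and any 0 ≤ l < p, the set D_l = {u : 0 ≤ u < p², gcd(u,p)=1, q_{p,w}(u) = l} has exactly p−1 elements. -/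
/-- The set `D_l = {u : 0 ≤ u < p², gcd(u,p)=1, q_{p,w}(u) = l}`. -/
def Dl (p w l : ℕ) : Finset ℕ :=
  (Finset.range (p ^ 2)).filter (fun u => Nat.gcd u p = 1 ∧ polyQuot p w u = l)

lemma aux_pow (a b : ℤ) (n : ℕ) :
    b ^ 2 ∣ (a + b) ^ (n + 1) - (a ^ (n + 1) + ((n + 1 : ℕ) : ℤ) * a ^ n * b) := by
  induction n with
  | zero => simp
  | succ m ih =>
    obtain ⟨c, hc⟩ := ih
    refine ⟨c * (a + b) + ((m + 1 : ℕ) : ℤ) * a ^ m, ?_⟩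
    push_cast at hc ⊢
    linear_combination (a + b) * hc

lemma polyQuot_cast (p w u : ℕ) (hp : 0 < p) :
    ((polyQuot p w u : ℕ) : ZMod p) = ((((u : ℤ) ^ w - (u : ℤ) ^ (w * p)) / (p : ℤ) : ℤ) : ZMod p) := by
  unfold polyQuot
  set x : ℤ := ((u : ℤ) ^ w - (u : ℤ) ^ (w * p)) / (p : ℤ) with hx
  have h0 : (0 : ℤ) ≤ x % p := Int.emod_nonneg _ (by exact_mod_cast hp.ne')
  have h1 : (((x % p).toNat : ℤ) : ZMod p) = ((x % p : ℤ) : ZMod p) := by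
    rw [Int.toNat_of_nonneg h0]
  rw [show (((x % p).toNat : ℕ) : ZMod p) = (((x % p).toNat : ℤ) : ZMod p) by push_cast; ring, h1]
  rw [ZMod.intCast_eq_intCast_iff]
  exact Int.emod_emod_of_dvd x dvd_rfl

lemma quot_formula (p w a k : ℕ) (hp : p.Prime) (hw1 : 1 ≤ w) :
    ((polyQuot p w (a + k * p) : ℕ) : ZMod p)
      = (polyQuot p w a : ZMod p) + (w : ZMod p) * (a : ZMod p) ^ (w - 1) * (k : ZMod p) := by
  haveI := Fact.mk hp
  have hp0 : (0 : ℕ) < p := hp.pos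
  have hpz : ((p : ℤ)) ≠ 0 := by exact_mod_cast hp0.ne'
  -- Fermat: p ∣ A
  have hA : (p : ℤ) ∣ (a : ℤ) ^ w - (a : ℤ) ^ (w * p) := by
    rw [← ZMod.intCast_zmod_eq_zero_iff_dvd]
    push_cast
    rw [pow_mul, ZMod.pow_card, sub_self]
  have hw : w - 1 + 1 = w := Nat.succ_pred_eq_of_pos hw1
  have h1 : ((p : ℤ)) ^ 2 ∣ ((a : ℤ) + (k : ℤ) * p) ^ w
      - ((a : ℤ) ^ w + (w : ℤ) * (a : ℤ) ^ (w - 1) * ((k : ℤ) * p)) := by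
    have := aux_pow (a : ℤ) ((k : ℤ) * p) (w - 1)
    rw [hw] at this
    exact dvd_trans ⟨(k : ℤ) ^ 2, by ring⟩ this
  have hd : (p : ℤ) ∣ ((a : ℤ) + (k : ℤ) * p) ^ w - (a : ℤ) ^ w := by
    have hbase : (a : ℤ) ≡ ((a : ℤ) + (k : ℤ) * p) [ZMOD (p : ℤ)] :=
      Int.modEq_iff_dvd.mpr ⟨(k : ℤ), by ring⟩
    exact ((hbase.pow w).dvd)
  have h2 : ((p : ℤ)) ^ 2 ∣ ((a : ℤ) + (k : ℤ) * p) ^ (w * p) - (a : ℤ) ^ (w * p) := by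
    have := dvd_sub_pow_of_dvd_sub (R := ℤ) (p := p) hd 1
    simpa [pow_one, ← pow_mul] using this
  obtain ⟨c1, hc1⟩ := h1
  obtain ⟨c2, hc2⟩ := h2
  obtain ⟨A', hA'⟩ := hA
  have key : ((a : ℤ) + (k : ℤ) * p) ^ w - ((a : ℤ) + (k : ℤ) * p) ^ (w * p)
      = p * (A' + ((w : ℤ) * (a : ℤ) ^ (w - 1) * k) + p * (c1 - c2)) := by
    linear_combination hc1 - hc2 + hA'
  have hU : (((a : ℤ) + (k : ℤ) * p) ^ w - ((a : ℤ) + (k : ℤ) * p) ^ (w * p)) / p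
      = A' + ((w : ℤ) * (a : ℤ) ^ (w - 1) * k) + p * (c1 - c2) := by
    rw [key, Int.mul_ediv_cancel_left _ hpz]
  have hAq : ((a : ℤ) ^ w - (a : ℤ) ^ (w * p)) / p = A' := by
    rw [hA', Int.mul_ediv_cancel_left _ hpz]
  rw [polyQuot_cast p w (a + k * p) hp0, polyQuot_cast p w a hp0]
  push_cast
  rw [hU, hAq]
  push_cast
  simp [ZMod.natCast_self]

lemma polyQuot_lt (p w u : ℕ) (hp : 0 < p) : polyQuot p w u < p := by
  unfold polyQuot
  have hpz : (0 : ℤ) < (p : ℤ) := by exact_mod_cast hp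
  have h1 := Int.emod_lt_of_pos (((u : ℤ) ^ w - (u : ℤ) ^ (w * p)) / (p : ℤ)) hpz
  have h2 := Int.emod_nonneg (((u : ℤ) ^ w - (u : ℤ) ^ (w * p)) / (p : ℤ)) hpz.ne'
  omega

lemma polyQuot_inj (p w : ℕ) (hp : p.Prime) (hw1 : 1 ≤ w) (hwp : w < p)
    (a : ℕ) (ha : ¬ p ∣ a) {k₁ k₂ : ℕ} (hk₁ : k₁ < p) (hk₂ : k₂ < p)
    (h : polyQuot p w (a + k₁ * p) = polyQuot p w (a + k₂ * p)) : k₁ = k₂ := by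
  haveI := Fact.mk hp
  have h1 := quot_formula p w a k₁ hp hw1
  have h2 := quot_formula p w a k₂ hp hw1
  rw [h, h2] at h1
  have heq : (w : ZMod p) * (a : ZMod p) ^ (w - 1) * (k₂ : ZMod p)
      = (w : ZMod p) * (a : ZMod p) ^ (w - 1) * (k₁ : ZMod p) := add_left_cancel h1
  have hw0 : (w : ZMod p) ≠ 0 := by
    rw [Ne, ZMod.natCast_eq_zero_iff]
    exact Nat.not_dvd_of_pos_of_lt hw1 hwp
  have ha0 : (a : ZMod p) ≠ 0 := by
    rw [Ne, ZMod.natCast_eq_zero_iff]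
    exact ha
  have hk : (k₂ : ZMod p) = (k₁ : ZMod p) :=
    mul_left_cancel₀ (mul_ne_zero hw0 (pow_ne_zero _ ha0)) heq
  have := congrArg ZMod.val hk
  rwa [ZMod.val_cast_of_lt hk₂, ZMod.val_cast_of_lt hk₁, eq_comm] at this

theorem stmt_5 (p w l : ℕ) (hp : p.Prime) (hodd : Odd p)
    (hw1 : 1 ≤ w) (hwp : w < p) (hl : l < p) :
    (Dl p w l).card = p - 1 := by
  have hp0 : 0 < p := hp.pos
  have hp1 : 1 < p := hp.one_lt
  -- membership characterization
  have hmem : ∀ u, u ∈ Dl p w l ↔ u < p ^ 2 ∧ Nat.gcd u p = 1 ∧ polyQuot p w u = l := by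
    intro u
    simp [Dl, Finset.mem_filter, Finset.mem_range, and_assoc]
  have hcard : (Finset.Ico 1 p).card = p - 1 := by simp
  rw [← hcard]
  apply Finset.card_bij (fun u _ => u % p)
  · -- maps into Ico 1 p
    intro u hu
    obtain ⟨hu2, hg, -⟩ := (hmem u).mp hu
    have h1 : u % p < p := Nat.mod_lt _ hp0
    have h2 : u % p ≠ 0 := by
      intro h0
      have hdvd : p ∣ u := Nat.dvd_of_mod_eq_zero h0
      have := Nat.le_of_dvd one_pos (hg ▸ Nat.dvd_gcd hdvd dvd_rfl)
      omega
    exact Finset.mem_Ico.mpr ⟨Nat.one_le_iff_ne_zero.mpr h2, h1⟩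
  · -- injective
    intro u hu v hv huv
    obtain ⟨hu2, hgu, hqu⟩ := (hmem u).mp hu
    obtain ⟨hv2, hgv, hqv⟩ := (hmem v).mp hv
    have hdu : u / p < p := Nat.div_lt_of_lt_mul (by rw [← pow_two]; exact hu2)
    have hdv : v / p < p := Nat.div_lt_of_lt_mul (by rw [← pow_two]; exact hv2)
    have hru : u % p + u / p * p = u := Nat.mod_add_div' u p
    have hrv : v % p + v / p * p = v := Nat.mod_add_div' v p
    have hnd : ¬ p ∣ u % p := by
      intro hd
      have hdu' : p ∣ u := (Nat.dvd_mod_iff dvd_rfl).mp hd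
      have := Nat.le_of_dvd one_pos (hgu ▸ Nat.dvd_gcd hdu' dvd_rfl)
      omega
    have hq : polyQuot p w (u % p + (u / p) * p) = polyQuot p w (u % p + (v / p) * p) := by
      rw [hru, huv, hrv]; rw [hqu, hqv]
    have hkk := polyQuot_inj p w hp hw1 hwp (u % p) hnd hdu hdv hq
    rw [← hru, ← hrv, huv, hkk]
  · -- surjective
    intro a ha
    obtain ⟨ha1, hap⟩ := Finset.mem_Ico.mp ha
    have hnd : ¬ p ∣ a := Nat.not_dvd_of_pos_of_lt (by omega) hap
    -- the map k ↦ polyQuot p w (a + k*p) on Fin p is injective hence surjective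
    let f : Fin p → Fin p := fun k => ⟨polyQuot p w (a + k.1 * p), polyQuot_lt p w _ hp0⟩
    have hfinj : Function.Injective f := by
      intro k₁ k₂ hk
      have := polyQuot_inj p w hp hw1 hwp a hnd k₁.2 k₂.2 (by simpa [f, Fin.ext_iff] using hk)
      exact Fin.ext this
    have hfsurj : Function.Surjective f := Finite.injective_iff_surjective.mp hfinj
    obtain ⟨k, hk⟩ := hfsurj ⟨l, hl⟩
    refine ⟨a + k.1 * p, ?_, ?_⟩
    · apply (hmem _).mpr
      refine ⟨?_, ?_, ?_⟩
      · calc a + k.1 * p < p + k.1 * p := by omega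
          _ = (k.1 + 1) * p := by ring
          _ ≤ p * p := Nat.mul_le_mul_right p k.2
          _ = p ^ 2 := (sq p).symm
      · have hnd2 : ¬ p ∣ (a + k.1 * p) := by
          intro hd
          exact hnd ((Nat.dvd_add_right (Dvd.intro_left _ rfl)).mp (by rwa [add_comm] at hd))
        exact (hp.coprime_iff_not_dvd.mpr hnd2).symm
      · simpa [f, Fin.ext_iff] using hk
    · simp [Nat.add_mul_mod_self_right, Nat.mod_eq_of_lt hap]
end

section
/- For an odd prime p, 1 ≤ w < p, and any 0 ≤ l < p, the reduction modulo p of the set D_l = {u : 0 ≤ u < p², gcd(u,p)=1, q_{p,w}(u)=l} equals the full set of invertible residues modulo p, i.e., {u mod p : u ∈ D_l} = (ℤ/pℤ)*. -/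
theorem sq_dvd_add_mul_pow_sub_sub {R : Type*} [CommRing R] (a b : R) (p n : ℕ) :
    (p : R) ^ 2 ∣ (a + b * p) ^ n - a ^ n - n * a ^ (n - 1) * b * p := by
  have h := (Dvd.intro_left _ (mul_pow b (p : R) 2).symm).trans (sq_dvd_add_pow_sub_sub (b * p) a n)
  convert h using 1
  ring

theorem sq_dvd_add_mul_pow_mul_sub {R : Type*} [CommRing R] (a b : R) (p n : ℕ) :
    (p : R) ^ 2 ∣ (a + b * p) ^ (n * p) - a ^ (n * p) := by
  have hp : (p : R) ^ 2 ∣ (a + b * p) ^ p - a ^ p := by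
    have h := (sq_dvd_add_mul_pow_sub_sub a b p p).add (Dvd.intro (a ^ (p - 1) * b) rfl)
    convert h using 1
    ring
  rw [mul_comm n p, pow_mul, pow_mul]
  exact hp.trans (sub_dvd_pow_sub_pow _ _ n)

theorem Int.prime_dvd_pow_sub_pow_mul {p : ℕ} (hp : p.Prime) (x : ℤ) (n : ℕ) :
    (p : ℤ) ∣ x ^ n - x ^ (n * p) := by
  have := Fact.mk hp
  rw [← ZMod.intCast_zmod_eq_zero_iff_dvd]
  push_cast
  rw [pow_mul, ZMod.pow_card, sub_self]

/-- The integer `(x^w - x^{wp}) / p`, whose residue mod `p` is `polyQuot p w x`. -/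
def intPolyQuot (p w : ℕ) (x : ℤ) : ℤ := (x ^ w - x ^ (w * p)) / p

theorem mul_intPolyQuot {p : ℕ} (hp : p.Prime) (w : ℕ) (x : ℤ) :
    p * intPolyQuot p w x = x ^ w - x ^ (w * p) :=
  Int.mul_ediv_cancel' (Int.prime_dvd_pow_sub_pow_mul hp x w)

theorem intPolyQuot_add_mul_modEq {p : ℕ} (hp : p.Prime) (w : ℕ) (a b : ℤ) :
    intPolyQuot p w (a + b * p) ≡ intPolyQuot p w a + w * a ^ (w - 1) * b [ZMOD p] := by
  have hp0 : (p : ℤ) ≠ 0 := by exact_mod_cast hp.ne_zero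
  rw [Int.modEq_iff_dvd, ← mul_dvd_mul_iff_left hp0, ← sq]
  have h := dvd_neg.mpr
    ((sq_dvd_add_mul_pow_sub_sub a b p w).sub (sq_dvd_add_mul_pow_mul_sub a b p w))
  convert h using 1
  rw [mul_sub, mul_add, mul_intPolyQuot hp, mul_intPolyQuot hp]
  ring

theorem polyQuot_eq_of_intCast_intPolyQuot {p w u l : ℕ} (hl : l < p)
    (h : (intPolyQuot p w u : ZMod p) = l) : polyQuot p w u = l := by
  have hmod : intPolyQuot p w u % p = l := by
    rw [← Int.emod_eq_of_lt (Int.natCast_nonneg l) (Int.ofNat_lt.mpr hl),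
      ← ZMod.intCast_eq_intCast_iff']
    exact_mod_cast h
  change (intPolyQuot p w u % p).toNat = l
  rw [hmod, Int.toNat_natCast]

theorem exists_polyQuot_add_mul_eq {p w a l : ℕ} (hp : p.Prime) (hw1 : 1 ≤ w) (hwp : w < p)
    (ha : (a : ZMod p) ≠ 0) (hl : l < p) : ∃ b < p, polyQuot p w (a + b * p) = l := by
  have := Fact.mk hp
  set K : ZMod p := w * (a : ZMod p) ^ (w - 1)
  have hK : K ≠ 0 :=
    mul_ne_zero (by rw [Ne, ZMod.natCast_eq_zero_iff]; exact Nat.not_dvd_of_pos_of_lt hw1 hwp)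
      (pow_ne_zero _ ha)
  set β : ZMod p := (l - intPolyQuot p w a) * K⁻¹
  refine ⟨β.val, ZMod.val_lt β, polyQuot_eq_of_intCast_intPolyQuot hl ?_⟩
  have hcong := (ZMod.intCast_eq_intCast_iff _ _ p).mpr (intPolyQuot_add_mul_modEq hp w a β.val)
  push_cast at hcong ⊢
  have hKβ : K * β = l - intPolyQuot p w a := by
    rw [mul_comm, mul_assoc, inv_mul_cancel₀ hK, mul_one]
  rw [hcong, ZMod.natCast_zmod_val]
  linear_combination hKβ

theorem stmt_6_general (p w l : ℕ) (hp : p.Prime)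
    (hw1 : 1 ≤ w) (hwp : w < p) (hl : l < p) :
    {x : ZMod p | ∃ u ∈ Dl p w l, (u : ZMod p) = x} = {x : ZMod p | IsUnit x} := by
  have := Fact.mk hp
  ext x
  simp only [Set.mem_ofPred_eq, Dl, Finset.mem_filter, Finset.mem_range]
  constructor
  · rintro ⟨u, ⟨-, hcop, -⟩, rfl⟩
    exact (ZMod.isUnit_iff_coprime u p).mpr hcop
  · intro hx
    have ha : ((x.val : ℕ) : ZMod p) ≠ 0 := by rw [ZMod.natCast_zmod_val]; exact hx.ne_zero
    obtain ⟨b, hb, hq⟩ := exists_polyQuot_add_mul_eq hp hw1 hwp ha hl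
    have hxp := ZMod.val_lt x
    refine ⟨x.val + b * p, ⟨by nlinarith, ?_, hq⟩, by simp⟩
    change Nat.Coprime _ _
    rw [Nat.coprime_add_mul_right_left, ← ZMod.isUnit_iff_coprime, ZMod.natCast_zmod_val]
    exact hx

theorem stmt_6 (p w l : ℕ) (hp : p.Prime) (hodd : Odd p)
    (hw1 : 1 ≤ w) (hwp : w < p) (hl : l < p) :
    {x : ZMod p | ∃ u ∈ Dl p w l, (u : ZMod p) = x} = {x : ZMod p | IsUnit x} :=
  stmt_6_general p w l hp hw1 hwp hl
end

section
/- Let p be an odd prime, 1 ≤ w < p, and for fixed 0 ≤ l < p let D_l = {u : 0 ≤ u < p², gcd(u,p)=1, q_{p,w}(u)=l}. Let θ be a primitive p-th root of unity in an algebraic closure of F₂, and D_l(X) = Σ_{u ∈ D_l} X^u over F₂. Then D_l(θ^m) = 0 if p | m and D_l(θ^m) = 1 otherwise. -/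
/-!
Modulo `p` the polynomial quotient is affine in the second base-`p` digit:
`q(a + k p) ≡ q(a) + w a^(w-1) k (mod p)`, because `(a + k p)^w ≡ a^w + w a^(w-1) k p` and
`(a + k p)^(w p) ≡ a^(w p) (mod p²)`. For `p ∤ a` the slope `w a^(w-1)` is a unit, so each nonzero
residue `a` has exactly one lift `u < p²` with `q(u) = l`, i.e. `u ↦ u % p` maps `D_l` bijectively
onto `{1, …, p - 1}`. Hence `D_l(ζ) = ζ + ⋯ + ζ^(p-1)` for every `p`-th root of unity `ζ`; in
characteristic two this is `p - 1 = 0` for `ζ = 1` and `-1 = 1` otherwise.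
-/

open Finset

def polyQuotZMod (p w : ℕ) (u : ℤ) : ZMod p := ((u ^ w - u ^ (w * p)) / p : ℤ)

theorem polyQuot_eq_val {p : ℕ} [NeZero p] (w u : ℕ) :
    polyQuot p w u = (polyQuotZMod p w u).val := by
  rw [polyQuot, polyQuotZMod, ← ZMod.val_intCast, Int.toNat_natCast]

theorem IsPrimitiveRoot.sum_Ico_one_pow {R : Type*} [CommRing R] [IsDomain R] {ζ : R} {k : ℕ}
    (hζ : IsPrimitiveRoot ζ k) (hk : 1 < k) : ∑ a ∈ Ico 1 k, ζ ^ a = -1 := by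
  rw [sum_Ico_eq_sub _ hk.le, hζ.geom_sum_eq_zero hk, sum_range_one, pow_zero, zero_sub]

theorem sq_dvd_pow_add_mul_sub {R : Type*} [CommRing R] (p w : ℕ) (a k : R) :
    (p : R) ^ 2 ∣ ((a + k * p) ^ w - (a + k * p) ^ (w * p)) - (a ^ w - a ^ (w * p))
      - w * a ^ (w - 1) * k * p := by
  have hlin : (p : R) ^ 2 ∣ (a + k * p) ^ w - a ^ (w - 1) * (k * p) * w - a ^ w :=
    (dvd_mul_left _ (k ^ 2)).trans (mul_pow k (p : R) 2 ▸ sq_dvd_add_pow_sub_sub (k * p) a w)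
  have hpow : (p : R) ^ 2 ∣ (a + k * p) ^ (w * p) - a ^ (w * p) := by
    have hp : (p : R) ∣ (a + k * p) ^ w - a ^ w :=
      (dvd_mul_left _ k).trans (by simpa using sub_dvd_pow_sub_pow (a + k * p) a w)
    simpa [pow_mul] using dvd_sub_pow_of_dvd_sub hp 1
  refine (dvd_sub hlin hpow).trans (dvd_of_eq ?_)
  ring

section Prime

variable {p : ℕ} [Fact p.Prime] (w : ℕ)

theorem prime_dvd_pow_sub_pow_mul (u : ℤ) : (p : ℤ) ∣ u ^ w - u ^ (w * p) := by
  rw [← ZMod.intCast_zmod_eq_zero_iff_dvd]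
  push_cast [pow_mul, ZMod.pow_card]
  exact sub_self _

theorem polyQuotZMod_add_mul (a k : ℤ) :
    polyQuotZMod p w (a + k * p) = polyQuotZMod p w a + w * a ^ (w - 1) * k := by
  have hp : (p : ℤ) ≠ 0 := by exact_mod_cast (Fact.out : p.Prime).ne_zero
  obtain ⟨x, hx⟩ := prime_dvd_pow_sub_pow_mul (p := p) w (a + k * p)
  obtain ⟨y, hy⟩ := prime_dvd_pow_sub_pow_mul (p := p) w a
  have hdvd : (p : ℤ) ∣ x - y - w * a ^ (w - 1) * k := by
    refine (mul_dvd_mul_iff_left hp).1 ?_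
    rw [← sq]
    refine (sq_dvd_pow_add_mul_sub p w a k).trans (dvd_of_eq ?_)
    rw [hx, hy]
    ring
  rw [← ZMod.intCast_zmod_eq_zero_iff_dvd] at hdvd
  simp only [polyQuotZMod, hx, hy, Int.mul_ediv_cancel_left _ hp]
  push_cast at hdvd ⊢
  linear_combination hdvd

theorem polyQuotZMod_natCast (u : ℕ) :
    polyQuotZMod p w u = polyQuotZMod p w (u % p : ℕ) + w * u ^ (w - 1) * (u / p : ℕ) := by
  have hu : (u : ℤ) = (u % p : ℕ) + (u / p : ℕ) * p := by
    exact_mod_cast (Nat.mod_add_div' u p).symm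
  rw [hu, polyQuotZMod_add_mul, Int.cast_natCast, Int.cast_natCast, ZMod.natCast_mod]

theorem mem_Dl_iff {l u : ℕ} (hl : l < p) :
    u ∈ Dl p w l ↔ u < p ^ 2 ∧ ¬ p ∣ u ∧ polyQuotZMod p w u = l := by
  have hval : (polyQuotZMod p w u).val = l ↔ polyQuotZMod p w u = l :=
    ⟨fun h => h ▸ (ZMod.natCast_zmod_val _).symm, fun h => h ▸ ZMod.val_cast_of_lt hl⟩
  rw [Dl, mem_filter, mem_range, polyQuot_eq_val, hval, ← Nat.Coprime, Nat.coprime_comm,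
    (Fact.out : p.Prime).coprime_iff_not_dvd]

theorem natCast_mul_pow_ne_zero (hw1 : 1 ≤ w) (hwp : w < p) {u : ℕ} (hu : ¬ p ∣ u) :
    (w : ZMod p) * (u : ZMod p) ^ (w - 1) ≠ 0 := by
  rw [← ZMod.natCast_eq_zero_iff] at hu
  refine mul_ne_zero ?_ (pow_ne_zero _ hu)
  rw [Ne, ZMod.natCast_eq_zero_iff]
  exact Nat.not_dvd_of_pos_of_lt hw1 hwp

theorem mapsTo_mod_Dl {l : ℕ} (hl : l < p) : Set.MapsTo (· % p) (Dl p w l) (Ico 1 p) := by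
  intro u hu
  obtain ⟨-, hpu, -⟩ := (mem_Dl_iff w hl).1 hu
  rw [coe_Ico, Set.mem_Ico]
  exact ⟨Nat.pos_of_ne_zero (mt Nat.dvd_of_mod_eq_zero hpu), Nat.mod_lt _ (Fact.out : p.Prime).pos⟩

theorem injOn_mod_Dl (hw1 : 1 ≤ w) (hwp : w < p) {l : ℕ} (hl : l < p) :
    Set.InjOn (· % p) (Dl p w l) := by
  intro u hu v hv (huv : u % p = v % p)
  obtain ⟨hu, hpu, hlu⟩ := (mem_Dl_iff w hl).1 hu
  obtain ⟨hv, -, hlv⟩ := (mem_Dl_iff w hl).1 hv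
  have huv' : (u : ZMod p) = v := (ZMod.natCast_eq_natCast_iff' u v p).2 huv
  rw [polyQuotZMod_natCast, huv] at hlu
  rw [polyQuotZMod_natCast, ← huv', ← hlu, add_right_inj] at hlv
  have hdiv := mul_left_cancel₀ (natCast_mul_pow_ne_zero w hw1 hwp hpu) hlv
  have hdiv_lt {n : ℕ} (hn : n < p ^ 2) : n / p < p := Nat.div_lt_of_lt_mul (sq p ▸ hn)
  rw [ZMod.natCast_eq_natCast_iff', Nat.mod_eq_of_lt (hdiv_lt hv),
    Nat.mod_eq_of_lt (hdiv_lt hu)] at hdiv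
  rw [← Nat.mod_add_div u p, ← Nat.mod_add_div v p, huv, hdiv]

theorem surjOn_mod_Dl (hw1 : 1 ≤ w) (hwp : w < p) {l : ℕ} (hl : l < p) :
    Set.SurjOn (· % p) (Dl p w l) (Ico 1 p) := by
  intro a ha
  rw [coe_Ico, Set.mem_Ico] at ha
  have hpa : ¬ p ∣ a := Nat.not_dvd_of_pos_of_lt ha.1 ha.2
  set k := ((l - polyQuotZMod p w a) / ((w : ZMod p) * (a : ZMod p) ^ (w - 1))).val with hk
  have hmod : (a + p * k) % p = a := by rw [Nat.add_mul_mod_self_left, Nat.mod_eq_of_lt ha.2]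
  have hdiv : (a + p * k) / p = k := by
    rw [Nat.add_mul_div_left _ _ (Fact.out : p.Prime).pos, Nat.div_eq_of_lt ha.2, zero_add]
  refine ⟨a + p * k, (mem_Dl_iff w hl).2 ⟨?_, ?_, ?_⟩, hmod⟩
  · calc a + p * k < p + p * k := by gcongr; exact ha.2
      _ = p * (k + 1) := by ring
      _ ≤ p * p := Nat.mul_le_mul_left p (ZMod.val_lt _)
      _ = p ^ 2 := (sq p).symm
  · rw [Nat.dvd_iff_mod_eq_zero, hmod]
    exact Nat.pos_iff_ne_zero.mp ha.1
  · have hcast : ((a + p * k : ℕ) : ZMod p) = a := by simp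
    rw [polyQuotZMod_natCast, hmod, hdiv, hcast, hk, ZMod.natCast_zmod_val,
      mul_div_cancel₀ _ (natCast_mul_pow_ne_zero w hw1 hwp hpa), add_sub_cancel]

end Prime

theorem stmt_7 (p w l m : ℕ) (hp : p.Prime) (hodd : Odd p)
    (hw1 : 1 ≤ w) (hwp : w < p) (hl : l < p)
    (θ : AlgebraicClosure (ZMod 2)) (hθ : IsPrimitiveRoot θ p) :
    (∑ u ∈ Dl p w l, (θ ^ m) ^ u) = if p ∣ m then 0 else 1 := by
  have := Fact.mk hp
  have hζ : (θ ^ m) ^ p = 1 := by rw [← pow_mul, mul_comm, pow_mul, hθ.pow_eq_one, one_pow]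
  rw [sum_nbij (· % p) (mapsTo_mod_Dl w hl) (injOn_mod_Dl w hw1 hwp hl) (surjOn_mod_Dl w hw1 hwp hl)
    fun u _ => pow_eq_pow_mod u hζ]
  split_ifs with hpm
  · rw [(hθ.pow_eq_one_iff_dvd m).2 hpm]
    simp only [one_pow, sum_const, Nat.card_Ico, nsmul_one]
    rw [CharTwo.natCast_eq_ite, if_pos (Nat.Odd.sub_odd hodd odd_one)]
  · have hζ' : IsPrimitiveRoot (θ ^ m) p :=
      hθ.pow_of_coprime m (Nat.coprime_comm.1 (hp.coprime_iff_not_dvd.2 hpm))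
    rw [hζ'.sum_Ico_one_pow hp.one_lt, CharTwo.neg_eq]
end

section
/- Let p be an odd prime such that 2 is a primitive root modulo p, let θ be a primitive p-th root of unity in an algebraic closure of F₂, and let G(X) ∈ F₂[X] with 1 ≤ deg G < p. Then G(θ) = 1 if and only if G(X) = X + X² + ⋯ + X^{p−1}. -/
/-!
Since `2` has order `p - 1 = φ(p)` modulo `p`, every irreducible factor of the cyclotomic
polynomial `Φ_p = 1 + X + ⋯ + X^{p-1}` over `𝔽₂` has degree `p - 1`, so `Φ_p` is irreducible and
is the minimal polynomial of `θ`. If `G(θ) = 1` then `G + 1` vanishes at `θ`; it is nonzero of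
degree at most `p - 1`, hence monic (over `𝔽₂`), hence equal to `Φ_p`.
-/

open Polynomial

theorem ZMod.irreducible_cyclotomic_of_orderOf_eq_totient {q n : ℕ} [Fact q.Prime]
    (hqn : ¬q ∣ n) (h : orderOf (q : ZMod n) = n.totient) :
    Irreducible (cyclotomic n (ZMod q)) := by
  refine ZMod.irreducible_of_dvd_cyclotomic_of_natDegree hqn dvd_rfl ?_
  rw [natDegree_cyclotomic, ← h, ← orderOf_units, ZMod.coe_unitOfCoprime]

theorem IsPrimitiveRoot.minpoly_zmod_eq_cyclotomic {q n : ℕ} [Fact q.Prime] {L : Type*}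
    [CommRing L] [IsDomain L] [Algebra (ZMod q) L] {μ : L} (hμ : IsPrimitiveRoot μ n)
    (hqn : ¬q ∣ n) (h : orderOf (q : ZMod n) = n.totient) :
    minpoly (ZMod q) μ = cyclotomic n (ZMod q) :=
  haveI := NeZero.of_not_dvd (ZMod q) hqn
  (hμ.minpoly_eq_cyclotomic_of_irreducible
    (ZMod.irreducible_cyclotomic_of_orderOf_eq_totient hqn h)).symm

theorem Polynomial.monic_of_ne_zero_zmod_two {P : (ZMod 2)[X]} (hP : P ≠ 0) : P.Monic := by
  have hne : ∀ c : ZMod 2, c ≠ 0 → c = 1 := by decide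
  exact hne _ (leadingCoeff_ne_zero.mpr hP)

theorem Polynomial.aeval_eq_one_iff_eq_one_add_minpoly {A : Type*} [Ring A]
    [Algebra (ZMod 2) A] {x : A} {G : (ZMod 2)[X]} (hG1 : 1 ≤ G.natDegree)
    (hGle : G.natDegree ≤ (minpoly (ZMod 2) x).natDegree) :
    aeval x G = 1 ↔ G = 1 + minpoly (ZMod 2) x := by
  have one_add_one_eq_zero : (1 : A) + 1 = 0 := by
    rw [← map_one (algebraMap (ZMod 2) A), ← map_add, show (1 : ZMod 2) + 1 = 0 from rfl,
      map_zero]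
  constructor
  · intro hGx
    have hdeg : (G + 1).natDegree = G.natDegree := by rw [← map_one C, natDegree_add_C]
    have hroot : aeval x (G + 1) = 0 := by rw [map_add, hGx, map_one, one_add_one_eq_zero]
    have hmin : G + 1 = minpoly (ZMod 2) x :=
      eq_of_monic_of_dvd_of_natDegree_le
        (monic_of_ne_zero_zmod_two (ne_zero_of_natDegree_gt (hG1.trans hGle)))
        (monic_of_ne_zero_zmod_two (ne_zero_of_natDegree_gt (hdeg ▸ hG1)))
        (minpoly.dvd _ _ hroot) (hdeg ▸ hGle)
    rw [← hmin, add_comm G, ← add_assoc, CharTwo.add_self_eq_zero, zero_add]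
  · rintro rfl
    rw [map_add, minpoly.aeval, map_one, add_zero]

theorem stmt_8 (p : ℕ) (hp : p.Prime) (hodd : Odd p)
    (h2 : orderOf (2 : ZMod p) = p - 1)
    (θ : AlgebraicClosure (ZMod 2)) (hθ : IsPrimitiveRoot θ p)
    (G : Polynomial (ZMod 2)) (hG1 : 1 ≤ G.natDegree) (hGp : G.natDegree < p) :
    Polynomial.aeval θ G = 1 ↔ G = ∑ i ∈ Finset.Ico 1 p, Polynomial.X ^ i := by
  have := Fact.mk hp
  have hord : orderOf ((2 : ℕ) : ZMod p) = p.totient := by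
    rw [Nat.cast_ofNat, h2, Nat.totient_prime hp]
  have hmin : minpoly (ZMod 2) θ = cyclotomic p (ZMod 2) :=
    hθ.minpoly_zmod_eq_cyclotomic hodd.not_two_dvd_nat hord
  have hGle : G.natDegree ≤ (minpoly (ZMod 2) θ).natDegree := by
    rw [hmin, natDegree_cyclotomic, Nat.totient_prime hp]
    omega
  rw [aeval_eq_one_iff_eq_one_add_minpoly hG1 hGle, hmin, cyclotomic_prime, Finset.range_eq_Ico,
    Finset.sum_eq_sum_Ico_succ_bot hp.pos, pow_zero, ← add_assoc, CharTwo.add_self_eq_zero,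
    zero_add]
end

section
/- Let p be an odd prime, 1 ≤ w < p, 0 ≤ l < p, and D_l(X) = Σ_{u∈D_l} X^u ∈ F_p[X] where D_l = {u : 0 ≤ u < p², gcd(u,p)=1, q_{p,w}(u)=l}. Then D_l(1) = p−1 in F_p, the j-th Hasse derivative of D_l evaluated at 1 equals 0 for 1 ≤ j ≤ p−2, and the (p−1)-th Hasse derivative of D_l evaluated at 1 equals 1. -/
open Finset Polynomial

theorem Polynomial.eval_one_hasseDeriv_sum_X_pow {R : Type*} [Semiring R] (j : ℕ) (s : Finset ℕ) :
    (hasseDeriv j (∑ u ∈ s, (X : R[X]) ^ u)).eval 1 = ∑ u ∈ s, (u.choose j : R) := by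
  simp [map_sum, eval_finsetSum, X_pow_eq_monomial, hasseDeriv_monomial, eval_monomial]

theorem Nat.sum_range_choose_eq_choose_succ (n j : ℕ) :
    ∑ b ∈ range n, b.choose j = n.choose (j + 1) := by
  induction n with
  | zero => simp
  | succ n ih => rw [sum_range_succ, ih, Nat.choose_succ_succ, add_comm]

theorem sq_dvd_pow_sub_pow_add_mul_sub (p w : ℕ) (b k : ℤ) :
    (p : ℤ) ^ 2 ∣ ((b + k * p) ^ w - (b + k * p) ^ (w * p)) - (b ^ w - b ^ (w * p))
      - p * (w * b ^ (w - 1) * k) := by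
  have hlin : (p : ℤ) ^ 2 ∣ (b + k * p) ^ w - b ^ (w - 1) * (k * p) * w - b ^ w :=
    (dvd_mul_left _ (k ^ 2)).trans (mul_pow k (p : ℤ) 2 ▸ sq_dvd_add_pow_sub_sub (k * p) b w)
  have hfrob : (p : ℤ) ^ 2 ∣ (b + k * p) ^ (w * p) - b ^ (w * p) := by
    have h := dvd_sub_pow_of_dvd_sub (p := p) (a := b + k * p) (b := b) ⟨k, by ring⟩ 1
    rw [pow_one] at h
    rw [mul_comm w, pow_mul, pow_mul]
    exact h.trans (sub_dvd_pow_sub_pow _ _ w)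
  exact (dvd_sub hlin hfrob).trans (dvd_of_eq (by ring))

/-- The lift `b + k p` of `b` with polynomial quotient `l`: `k` solves the linear congruence
of `polyQuot_add_mul`. -/
def polyQuotLift (p w l b : ℕ) : ℕ :=
  b + (((w : ZMod p) * (b : ZMod p) ^ (w - 1))⁻¹ * ((l : ZMod p) - polyQuot p w b)).val * p

theorem polyQuotLift_mod {p w l b : ℕ} (hb : b < p) : polyQuotLift p w l b % p = b := by
  rw [polyQuotLift, Nat.add_mul_mod_self_right, Nat.mod_eq_of_lt hb]

section PolyQuot

variable {p : ℕ} [Fact p.Prime] {w l : ℕ}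

theorem dvd_pow_sub_pow_mul (w : ℕ) (u : ℤ) : (p : ℤ) ∣ u ^ w - u ^ (w * p) := by
  rw [← ZMod.intCast_zmod_eq_zero_iff_dvd]
  push_cast
  rw [pow_mul, ZMod.pow_card, sub_self]

theorem polyQuot_natCast (w u : ℕ) :
    (polyQuot p w u : ZMod p) = (((u ^ w - u ^ (w * p) : ℤ) / p : ℤ) : ZMod p) := by
  have hp : (p : ℤ) ≠ 0 := by exact_mod_cast (Fact.out : p.Prime).ne_zero
  rw [polyQuot, ← Int.cast_natCast, Int.toNat_of_nonneg (Int.emod_nonneg _ hp), ZMod.intCast_mod]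

theorem polyQuot_eq_iff {u : ℕ} (hl : l < p) :
    polyQuot p w u = l ↔ (polyQuot p w u : ZMod p) = l := by
  have hq : polyQuot p w u < p := by
    have hp : (0 : ℤ) < p := by exact_mod_cast (Fact.out : p.Prime).pos
    have := Int.emod_lt_of_pos (((u : ℤ) ^ w - (u : ℤ) ^ (w * p)) / p) hp
    unfold polyQuot
    omega
  rw [ZMod.natCast_eq_natCast_iff', Nat.mod_eq_of_lt hq, Nat.mod_eq_of_lt hl]

theorem polyQuot_add_mul (w b k : ℕ) :
    (polyQuot p w (b + k * p) : ZMod p) = polyQuot p w b + w * b ^ (w - 1) * k := by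
  have hp : (p : ℤ) ≠ 0 := by exact_mod_cast (Fact.out : p.Prime).ne_zero
  obtain ⟨A, hA⟩ := dvd_pow_sub_pow_mul (p := p) w ((b + k * p : ℕ) : ℤ)
  obtain ⟨B, hB⟩ := dvd_pow_sub_pow_mul (p := p) w (b : ℤ)
  have hdvd : (p : ℤ) ∣ A - B - w * b ^ (w - 1) * k := by
    rw [← mul_dvd_mul_iff_left hp, ← sq, mul_sub, mul_sub, ← hA, ← hB]
    exact_mod_cast sq_dvd_pow_sub_pow_add_mul_sub p w b k
  rw [polyQuot_natCast, polyQuot_natCast, hA, hB, Int.mul_ediv_cancel_left _ hp,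
    Int.mul_ediv_cancel_left _ hp]
  rw [← ZMod.intCast_zmod_eq_zero_iff_dvd] at hdvd
  push_cast at hdvd ⊢
  linear_combination hdvd

theorem natCast_mul_pow_ne_zero_s12 (hw : (w : ZMod p) ≠ 0) {b : ℕ} (hb : b ∈ Ico 1 p) :
    (w : ZMod p) * (b : ZMod p) ^ (w - 1) ≠ 0 := by
  obtain ⟨hb1, hbp⟩ := mem_Ico.mp hb
  refine mul_ne_zero hw (pow_ne_zero _ ?_)
  rw [Ne, ZMod.natCast_eq_zero_iff]
  exact Nat.not_dvd_of_pos_of_lt hb1 hbp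

theorem polyQuotLift_mem_Dl (hw : (w : ZMod p) ≠ 0) (hl : l < p) {b : ℕ} (hb : b ∈ Ico 1 p) :
    polyQuotLift p w l b ∈ Dl p w l := by
  obtain ⟨hb1, hbp⟩ := mem_Ico.mp hb
  refine mem_filter.mpr ⟨mem_range.mpr ?_, ?_, ?_⟩
  · have hk := ZMod.val_lt
      (((w : ZMod p) * (b : ZMod p) ^ (w - 1))⁻¹ * ((l : ZMod p) - (polyQuot p w b : ZMod p)))
    rw [polyQuotLift]
    nlinarith
  · rw [polyQuotLift, Nat.gcd_add_mul_right_left]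
    exact ((Fact.out : p.Prime).coprime_iff_not_dvd.mpr (Nat.not_dvd_of_pos_of_lt hb1 hbp)).symm
  · rw [polyQuot_eq_iff hl, polyQuotLift, polyQuot_add_mul, ZMod.natCast_val, ZMod.cast_id,
      mul_inv_cancel_left₀ (natCast_mul_pow_ne_zero_s12 hw hb), add_sub_cancel]

theorem mod_mem_Ico_of_mem_Dl {u : ℕ} (hu : u ∈ Dl p w l) : u % p ∈ Ico 1 p := by
  have hcop : Nat.gcd u p = 1 := (mem_filter.mp hu).2.1
  refine mem_Ico.mpr ⟨Nat.pos_of_ne_zero fun h => ?_, Nat.mod_lt _ (Fact.out : p.Prime).pos⟩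
  exact (Fact.out : p.Prime).not_dvd_one (hcop ▸ Nat.dvd_gcd (Nat.dvd_of_mod_eq_zero h) dvd_rfl)

theorem polyQuotLift_mod_of_mem_Dl (hw : (w : ZMod p) ≠ 0) {u : ℕ} (hu : u ∈ Dl p w l) :
    polyQuotLift p w l (u % p) = u := by
  obtain ⟨hup, -, hq⟩ := mem_filter.mp hu
  have hk : u / p < p := Nat.div_lt_of_lt_mul (by rw [← sq]; exact mem_range.mp hup)
  have hdecomp : u = u % p + u / p * p := by rw [mul_comm]; exact (Nat.mod_add_div u p).symm
  have hl : (l : ZMod p) =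
      polyQuot p w (u % p) + w * ((u % p : ℕ) : ZMod p) ^ (w - 1) * (u / p : ℕ) := by
    rw [← hq, ← polyQuot_add_mul, ← hdecomp]
  rw [polyQuotLift, hl, add_sub_cancel_left,
    inv_mul_cancel_left₀ (natCast_mul_pow_ne_zero_s12 hw (mod_mem_Ico_of_mem_Dl hu)),
    ZMod.val_cast_of_lt hk, ← hdecomp]

theorem sum_Dl_comp_mod {M : Type*} [AddCommMonoid M] (hw : (w : ZMod p) ≠ 0) (hl : l < p)
    (f : ℕ → M) : ∑ u ∈ Dl p w l, f (u % p) = ∑ b ∈ Ico 1 p, f b :=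
  sum_nbij' (· % p) (polyQuotLift p w l) (fun _ => mod_mem_Ico_of_mem_Dl)
    (fun _ => polyQuotLift_mem_Dl hw hl) (fun _ => polyQuotLift_mod_of_mem_Dl hw)
    (fun _ hb => polyQuotLift_mod (mem_Ico.mp hb).2) (fun _ _ => rfl)

theorem card_Dl (hw : (w : ZMod p) ≠ 0) (hl : l < p) : #(Dl p w l) = p - 1 := by
  rw [card_eq_sum_ones, sum_Dl_comp_mod hw hl (fun _ => 1), ← card_eq_sum_ones, Nat.card_Ico]

theorem sum_choose_Dl (hw : (w : ZMod p) ≠ 0) (hl : l < p) {j : ℕ} (hj : 1 ≤ j) (hjp : j < p) :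
    ∑ u ∈ Dl p w l, (u.choose j : ZMod p) = (p.choose (j + 1) : ZMod p) := by
  have hlucas (u : ℕ) : (u.choose j : ZMod p) = ((u % p).choose j : ZMod p) := by
    have h := Choose.choose_modEq_choose_mod_mul_choose_div_nat (n := u) (k := j) (p := p)
    rw [Nat.mod_eq_of_lt hjp, Nat.div_eq_of_lt hjp, Nat.choose_zero_right, mul_one] at h
    exact (ZMod.natCast_eq_natCast_iff _ _ _).mpr h
  rw [sum_congr rfl fun u _ => hlucas u, sum_Dl_comp_mod hw hl (fun b => (b.choose j : ZMod p)),
    ← Nat.cast_sum, ← Nat.sum_range_choose_eq_choose_succ, range_eq_Ico,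
    sum_eq_sum_Ico_succ_bot (Fact.out : p.Prime).pos, Nat.choose_eq_zero_of_lt hj, zero_add]

end PolyQuot

theorem stmt_12_general (p w l : ℕ) (hp : p.Prime)
    (hw1 : 1 ≤ w) (hwp : w < p) (hl : l < p) :
    (∑ u ∈ Dl p w l, (Polynomial.X : Polynomial (ZMod p)) ^ u).eval 1 = ((p - 1 : ℕ) : ZMod p) ∧
    (∀ j : ℕ, 1 ≤ j → j ≤ p - 2 →
      (Polynomial.hasseDeriv j (∑ u ∈ Dl p w l, (Polynomial.X : Polynomial (ZMod p)) ^ u)).eval 1 = 0) ∧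
    (Polynomial.hasseDeriv (p - 1) (∑ u ∈ Dl p w l, (Polynomial.X : Polynomial (ZMod p)) ^ u)).eval 1 = 1 := by
  have : Fact p.Prime := ⟨hp⟩
  have hp2 := hp.two_le
  have hw : (w : ZMod p) ≠ 0 := by
    rw [Ne, ZMod.natCast_eq_zero_iff]
    exact Nat.not_dvd_of_pos_of_lt hw1 hwp
  refine ⟨?_, fun j hj1 hj2 => ?_, ?_⟩
  · simp [eval_finsetSum, card_Dl hw hl]
  · rw [eval_one_hasseDeriv_sum_X_pow, sum_choose_Dl hw hl hj1 (by omega), ZMod.natCast_eq_zero_iff]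
    exact hp.dvd_choose_self (by omega) (by omega)
  · rw [eval_one_hasseDeriv_sum_X_pow, sum_choose_Dl hw hl (by omega) (by omega),
      Nat.sub_add_cancel hp.one_le, Nat.choose_self, Nat.cast_one]

theorem stmt_12 (p w l : ℕ) (hp : p.Prime) (hodd : Odd p)
    (hw1 : 1 ≤ w) (hwp : w < p) (hl : l < p) :
    (∑ u ∈ Dl p w l, (Polynomial.X : Polynomial (ZMod p)) ^ u).eval 1 = ((p - 1 : ℕ) : ZMod p) ∧
    (∀ j : ℕ, 1 ≤ j → j ≤ p - 2 →
      (Polynomial.hasseDeriv j (∑ u ∈ Dl p w l, (Polynomial.X : Polynomial (ZMod p)) ^ u)).eval 1 = 0) ∧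
    (Polynomial.hasseDeriv (p - 1) (∑ u ∈ Dl p w l, (Polynomial.X : Polynomial (ZMod p)) ^ u)).eval 1 = 1 :=
  stmt_12_general p w l hp hw1 hwp hl
end

section
/- Let p be a prime and e(X) ∈ F_p[X] with (X−1)^{p−1} exactly dividing e(X) (i.e., (X−1)^{p−1} | e(X) but (X−1)^p ∤ e(X)). Then e(X) ≡ c·(1 + X + X² + ⋯ + X^{p−1}) (mod X^p − 1) for some nonzero c ∈ F_p; in particular, e(X) reduced modulo X^p − 1 has exactly p nonzero coefficients. -/
/-!
Write `e = (X - 1)^(p - 1) * g` and `c = g(1)`. Since `X - 1 ∣ g - c`, we get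
`e ≡ c (X - 1)^(p - 1) (mod (X - 1)^p)`, and `c ≠ 0` because `(X - 1)^p ∤ e`. In characteristic `p`
the Frobenius gives `(X - 1)^p = X^p - 1`, and dividing by `X - 1` gives
`(X - 1)^(p - 1) = 1 + X + ⋯ + X^(p - 1)`.
-/

open Polynomial Finset

namespace Polynomial

variable {R : Type*}

lemma support_C_mul_geom_sum_X [Semiring R] {c : R} (hc : c ≠ 0) (n : ℕ) :
    (C c * ∑ i ∈ range n, (X : R[X]) ^ i).support = range n := by
  ext m
  simp [mem_support_iff, coeff_X_pow, hc]

section CommRing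

variable [CommRing R]

lemma modByMonic_X_sub_C_pow_succ_mul [Nontrivial R] (a : R) (n : ℕ) (g : R[X]) :
    (X - C a) ^ n * g %ₘ (X - C a) ^ (n + 1) = C (g.eval a) * (X - C a) ^ n := by
  have hmonic : ((X - C a) ^ (n + 1)).Monic := (monic_X_sub_C a).pow _
  rw [modByMonic_eq_of_dvd_sub hmonic, (modByMonic_eq_self_iff hmonic).2]
  · calc (C (g.eval a) * (X - C a) ^ n).degree
        ≤ (n : WithBot ℕ) := by compute_degree!
      _ < ((X - C a) ^ (n + 1)).degree := by
        rw [degree_pow' (by simp), degree_X_sub_C, nsmul_one]; exact_mod_cast n.lt_succ_self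
  · rw [pow_succ, mul_comm (C _), ← mul_sub]
    exact mul_dvd_mul_left _ X_sub_C_dvd_sub_C_eval

lemma X_sub_C_pow_succ_dvd_mul_iff [IsDomain R] (a : R) (n : ℕ) (g : R[X]) :
    (X - C a) ^ (n + 1) ∣ (X - C a) ^ n * g ↔ g.IsRoot a := by
  rw [pow_succ, mul_dvd_mul_iff_left (pow_ne_zero _ (X_sub_C_ne_zero a)), dvd_iff_isRoot]

variable (p : ℕ) [Fact p.Prime] [CharP R p]

lemma X_sub_one_pow_char : (X - 1 : R[X]) ^ p = X ^ p - 1 := by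
  rw [sub_pow_char, one_pow]

lemma X_sub_one_pow_pred_char [IsDomain R] :
    (X - 1 : R[X]) ^ (p - 1) = ∑ i ∈ range p, X ^ i := by
  apply mul_right_cancel₀ (X_sub_C_ne_zero (1 : R))
  rw [← C_1, ← pow_succ, Nat.sub_add_cancel (Fact.out : p.Prime).pos, C_1, geom_sum_mul,
    X_sub_one_pow_char]

end CommRing

end Polynomial

theorem stmt_14 (p : ℕ) (hp : p.Prime) (e : Polynomial (ZMod p))
    (h1 : ((Polynomial.X : Polynomial (ZMod p)) - 1) ^ (p - 1) ∣ e)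
    (h2 : ¬ ((Polynomial.X : Polynomial (ZMod p)) - 1) ^ p ∣ e) :
    ∃ c : ZMod p, c ≠ 0 ∧
      e %ₘ (Polynomial.X ^ p - 1) = Polynomial.C c * ∑ i ∈ Finset.range p, Polynomial.X ^ i ∧
      (e %ₘ (Polynomial.X ^ p - 1)).support.card = p := by
  have := Fact.mk hp
  obtain ⟨g, rfl⟩ := h1
  have hp_pred : p - 1 + 1 = p := Nat.sub_add_cancel hp.pos
  have hc : g.eval 1 ≠ 0 := by
    have := X_sub_C_pow_succ_dvd_mul_iff (1 : ZMod p) (p - 1) g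
    rw [C_1, hp_pred] at this
    exact (not_congr this).1 h2
  have hmod : (X - 1) ^ (p - 1) * g %ₘ (X ^ p - 1) = C (g.eval 1) * ∑ i ∈ range p, X ^ i := by
    have := modByMonic_X_sub_C_pow_succ_mul (1 : ZMod p) (p - 1) g
    rw [C_1, hp_pred, X_sub_one_pow_char p] at this
    rw [this, X_sub_one_pow_pred_char p]
  exact ⟨g.eval 1, hc, hmod, by rw [hmod, support_C_mul_geom_sum_X hc, card_range]⟩
end

section
/- Let p be an odd prime, 1 ≤ w < p, and 𝓘 ⊆ {0,…,p−1} nonempty with |𝓘| ≤ (p−1)/2; for w = 1 define the p²-periodic sequence (h_u) over F_p by h_u = 1 if u mod p² ∈ ∪_{l∈𝓘}(D_l ∪ {lp}) and h_u = 0 otherwise. Then the generating polynomial H(X) = Σ_{u<p²} h_u X^u ∈ F_p[X] satisfies (X−1)^{p−1} | H(X) but (X−1)^p ∤ H(X); consequently the linear complexity of (h_u) over F_p equals p² − p + 1. -/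
/-- Generating polynomial over `F_p` of one period of the sequence `(h_u)` for `w = 1`:
`h_u = 1` iff `u ∈ ∪_{l∈𝓘}(D_l ∪ {lp})`. -/
noncomputable def genPolyP1 (p : ℕ) (I : Finset ℕ) : Polynomial (ZMod p) :=
  ∑ u ∈ Finset.range (p ^ 2),
    if (Nat.gcd u p = 1 ∧ polyQuot p 1 u ∈ I) ∨ (∃ l ∈ I, u = l * p) then Polynomial.X ^ u else 0

open Polynomial Finset

theorem pow_sub_one_dvd_pow_sub_pow_mod {R : Type*} [CommRing R] (x : R) (n u : ℕ) :
    x ^ n - 1 ∣ x ^ u - x ^ (u % n) := by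
  have h : x ^ u - x ^ (u % n) = x ^ (u % n) * ((x ^ n) ^ (u / n) - 1) := by
    rw [mul_sub, mul_one, ← pow_mul, ← pow_add, Nat.mod_add_div]
  rw [h]
  exact dvd_mul_of_dvd_right (by simpa using sub_dvd_pow_sub_pow (x ^ n) 1 (u / n)) _

theorem Polynomial.geom_sum_X_eq_X_sub_one_pow (R : Type*) [Ring R] (p : ℕ) [hp : Fact p.Prime]
    [CharP R p] : ∑ i ∈ range p, (X : R[X]) ^ i = (X - 1) ^ (p - 1) := by
  have := cyclotomic_mul_prime_eq_pow_of_not_dvd R (n := 1) hp.out.not_dvd_one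
  rwa [one_mul, cyclotomic_one, cyclotomic_prime] at this

theorem pow_dvd_and_not_pow_succ_dvd_of_pow_succ_dvd_sub {R : Type*} [CommRing R] [IsDomain R]
    {π c f : R} {k : ℕ} (hπ : π ≠ 0) (hc : ¬ π ∣ c) (h : π ^ (k + 1) ∣ f - c * π ^ k) :
    π ^ k ∣ f ∧ ¬ π ^ (k + 1) ∣ f := by
  refine ⟨(dvd_sub_left (dvd_mul_left _ c)).mp ((pow_dvd_pow π k.le_succ).trans h), fun hf => ?_⟩
  have hcπ : π ^ k * π ∣ π ^ k * c := by
    rw [← pow_succ, mul_comm]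
    exact (dvd_sub_right hf).mp h
  exact hc ((mul_dvd_mul_iff_left (pow_ne_zero k hπ)).mp hcπ)

theorem EuclideanDomain.gcd_prime_pow_associated {R : Type*} [EuclideanDomain R] [DecidableEq R]
    {π f : R} (hπ : Prime π) {k n : ℕ} (hkn : k ≤ n) (hdvd : π ^ k ∣ f)
    (hndvd : ¬ π ^ (k + 1) ∣ f) : Associated (EuclideanDomain.gcd (π ^ n) f) (π ^ k) := by
  obtain ⟨i, -, hi⟩ := (dvd_prime_pow hπ n).mp (EuclideanDomain.gcd_dvd_left (π ^ n) f)
  have hki : k ≤ i := (pow_dvd_pow_iff hπ.ne_zero hπ.not_isUnit).mp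
    ((EuclideanDomain.dvd_gcd (pow_dvd_pow π hkn) hdvd).trans hi.dvd)
  have hik : i ≤ k := by
    by_contra! hlt
    exact hndvd ((pow_dvd_pow π hlt).trans
      (hi.symm.dvd.trans (EuclideanDomain.gcd_dvd_right _ _)))
  rwa [le_antisymm hik hki] at hi

theorem card_filter_val_add_mem {n : ℕ} [NeZero n] (c : ZMod n) {I : Finset ℕ}
    (hI : I ⊆ range n) : #{j ∈ range n | (c + (j : ℕ)).val ∈ I} = #I := by
  refine card_nbij' (fun j => (c + j).val) (fun l => ((l : ZMod n) - c).val) ?_ ?_ ?_ ?_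
  · intro j hj
    exact (mem_filter.mp hj).2
  · intro l hl
    have hl' : l < n := mem_range.mp (hI hl)
    simpa [ZMod.val_lt, ZMod.val_cast_of_lt hl'] using hl
  · intro j hj
    have hj' : j < n := mem_range.mp (mem_filter.mp hj).1
    simp [ZMod.val_cast_of_lt hj']
  · intro l hl
    have hl' : l < n := mem_range.mp (hI hl)
    simp [ZMod.val_cast_of_lt hl']

theorem card_filter_range_sq_mod {n a : ℕ} (ha : a < n) (P : ℕ → Prop) [DecidablePred P] :
    #{u ∈ range (n ^ 2) | P u ∧ u % n = a} = #{j ∈ range n | P (a + n * j)} := by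
  have hn : 0 < n := by omega
  refine card_nbij' (· / n) (a + n * ·) ?_ ?_ ?_ ?_
  · intro u hu
    simp only [coe_filter, mem_range, Set.mem_ofPred_eq] at hu ⊢
    obtain ⟨hu, hP, rfl⟩ := hu
    refine ⟨Nat.div_lt_of_lt_mul (by rwa [← sq]), ?_⟩
    rwa [Nat.mod_add_div]
  · intro j hj
    simp only [coe_filter, mem_range, Set.mem_ofPred_eq] at hj ⊢
    obtain ⟨hj, hP⟩ := hj
    refine ⟨by nlinarith, hP, ?_⟩
    rw [Nat.add_mul_mod_self_left, Nat.mod_eq_of_lt ha]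
  · intro u hu
    simp only [coe_filter, mem_range, Set.mem_ofPred_eq] at hu
    simp only [← hu.2.2, Nat.mod_add_div]
  · intro j _
    simp only [Nat.add_mul_div_left _ _ hn, Nat.div_eq_of_lt ha, zero_add]

theorem Int.fermatQuotient_add_mul_modEq {p : ℕ} [hp : Fact p.Prime] (a j : ℤ) :
    ((a + p * j) - (a + p * j) ^ p) / p ≡ (a - a ^ p) / p + j [ZMOD p] := by
  have hp0 : (p : ℤ) ≠ 0 := by exact_mod_cast hp.out.ne_zero
  have fermat (u : ℤ) : (p : ℤ) ∣ u - u ^ p := by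
    rw [← ZMod.intCast_zmod_eq_zero_iff_dvd]; push_cast; rw [ZMod.pow_card, sub_self]
  obtain ⟨s, hs⟩ := fermat (a + p * j)
  obtain ⟨t, ht⟩ := fermat a
  have hsq : (p : ℤ) * p ∣ (a + p * j) ^ p - a ^ p := by
    simpa [sq] using dvd_sub_pow_of_dvd_sub (p := p) (a := a + p * j) (b := a) ⟨j, by ring⟩ 1
  have hdiff : (p : ℤ) * (t + j - s) = (a + p * j) ^ p - a ^ p := by linear_combination hs - ht
  rw [hs, ht, Int.mul_ediv_cancel_left _ hp0, Int.mul_ediv_cancel_left _ hp0, Int.modEq_iff_dvd,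
    ← mul_dvd_mul_iff_left hp0, hdiff]
  exact hsq

theorem polyQuot_one_lt {p : ℕ} [NeZero p] (u : ℕ) : polyQuot p 1 u < p := by
  have hp : 0 < p := Nat.pos_of_ne_zero (NeZero.ne p)
  have := Int.emod_lt_of_pos (((u : ℤ) ^ 1 - (u : ℤ) ^ (1 * p)) / p)
    (by exact_mod_cast hp : (0 : ℤ) < p)
  unfold polyQuot
  omega

theorem natCast_polyQuot_one {p : ℕ} [NeZero p] (u : ℕ) :
    (polyQuot p 1 u : ZMod p) = ((((u : ℤ) - (u : ℤ) ^ p) / p : ℤ) : ZMod p) := by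
  have := Int.emod_nonneg (((u : ℤ) ^ 1 - (u : ℤ) ^ (1 * p)) / p)
    (by exact_mod_cast NeZero.ne p : (p : ℤ) ≠ 0)
  rw [polyQuot, ← Int.cast_natCast, Int.toNat_of_nonneg this, ZMod.intCast_mod, pow_one, one_mul]

theorem polyQuot_one_add_mul {p : ℕ} [Fact p.Prime] (a j : ℕ) :
    polyQuot p 1 (a + p * j) = ((polyQuot p 1 a : ZMod p) + j).val := by
  rw [← ZMod.val_cast_of_lt (polyQuot_one_lt (a + p * j)), natCast_polyQuot_one,
    natCast_polyQuot_one]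
  push_cast
  rw [(ZMod.intCast_eq_intCast_iff _ _ p).mpr (Int.fermatQuotient_add_mul_modEq a j)]
  push_cast
  rfl

def genSupportP1 (p : ℕ) (I : Finset ℕ) : Finset ℕ :=
  {u ∈ range (p ^ 2) | (Nat.gcd u p = 1 ∧ polyQuot p 1 u ∈ I) ∨ ∃ l ∈ I, u = l * p}

theorem genPolyP1_eq_sum_genSupportP1 (p : ℕ) (I : Finset ℕ) :
    genPolyP1 p I = ∑ u ∈ genSupportP1 p I, X ^ u :=
  (sum_filter _ _).symm

section GenSupportP1

variable {p : ℕ} [hp : Fact p.Prime] {I : Finset ℕ}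

theorem card_genSupportP1_filter_mod_eq (hI : I ⊆ range p) {a : ℕ} (ha : a < p) :
    #{u ∈ genSupportP1 p I | u % p = a} = #I := by
  rw [genSupportP1, filter_filter, card_filter_range_sq_mod ha]
  rcases Nat.eq_zero_or_pos a with rfl | ha0
  · have hmem (j : ℕ) : ((Nat.gcd (0 + p * j) p = 1 ∧ polyQuot p 1 (0 + p * j) ∈ I) ∨
        ∃ l ∈ I, 0 + p * j = l * p) ↔ j ∈ I := by
      simp [hp.out.ne_one, mul_comm _ p, Nat.mul_left_cancel_iff hp.out.pos]
    simp only [hmem, filter_mem_eq_inter, inter_eq_right.mpr hI]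
  · have hmem (j : ℕ) : ((Nat.gcd (a + p * j) p = 1 ∧ polyQuot p 1 (a + p * j) ∈ I) ∨
        ∃ l ∈ I, a + p * j = l * p) ↔ ((polyQuot p 1 a : ZMod p) + (j : ℕ)).val ∈ I := by
      have hndvd : ¬ p ∣ a + p * j := by
        rw [Nat.dvd_add_left (dvd_mul_right p j)]
        exact fun h => ha0.ne' (Nat.eq_zero_of_dvd_of_lt h ha)
      have hcop : Nat.gcd (a + p * j) p = 1 :=
        Nat.coprime_comm.mp ((Nat.Prime.coprime_iff_not_dvd hp.out).mpr hndvd)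
      have hnot : ¬ ∃ l ∈ I, a + p * j = l * p := fun ⟨l, _, h⟩ => hndvd ⟨l, by rw [h, mul_comm]⟩
      simp only [hcop, hnot, true_and, or_false, polyQuot_one_add_mul]
    simp only [hmem]
    exact card_filter_val_add_mem _ hI

theorem sum_genSupportP1_X_pow_mod (hI : I ⊆ range p) :
    ∑ u ∈ genSupportP1 p I, (X : (ZMod p)[X]) ^ (u % p) =
      (#I : (ZMod p)[X]) * (X - 1) ^ (p - 1) := by
  rw [← sum_fiberwise_of_maps_to (g := (· % p)) (t := range p)
    (fun u _ => mem_range.mpr (Nat.mod_lt _ hp.out.pos))]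
  calc ∑ a ∈ range p, ∑ u ∈ genSupportP1 p I with u % p = a, (X : (ZMod p)[X]) ^ (u % p)
      = ∑ a ∈ range p, (#I : (ZMod p)[X]) * X ^ a := sum_congr rfl fun a ha => by
        rw [sum_congr rfl (fun u hu => by rw [(mem_filter.mp hu).2]), sum_const,
          card_genSupportP1_filter_mod_eq hI (mem_range.mp ha), nsmul_eq_mul]
    _ = _ := by rw [← mul_sum, geom_sum_X_eq_X_sub_one_pow]

theorem X_sub_one_pow_dvd_genPolyP1_sub (hI : I ⊆ range p) :
    (X - 1 : (ZMod p)[X]) ^ p ∣ genPolyP1 p I - (#I : (ZMod p)[X]) * (X - 1) ^ (p - 1) := by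
  rw [sub_pow_char, one_pow, genPolyP1_eq_sum_genSupportP1, ← sum_genSupportP1_X_pow_mod hI,
    ← sum_sub_distrib]
  exact dvd_sum fun u _ => pow_sub_one_dvd_pow_sub_pow_mod X p u

end GenSupportP1

theorem stmt_17_general (p : ℕ) (I : Finset ℕ) [hp : Fact p.Prime]
    (hI : I ⊆ Finset.range p) (hIne : I.Nonempty) (hIcard : I.card ≤ (p - 1) / 2) :
    (((Polynomial.X : Polynomial (ZMod p)) - 1) ^ (p - 1) ∣ genPolyP1 p I) ∧
    (¬ ((Polynomial.X : Polynomial (ZMod p)) - 1) ^ p ∣ genPolyP1 p I) ∧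
    p ^ 2 - (EuclideanDomain.gcd ((Polynomial.X : Polynomial (ZMod p)) ^ (p ^ 2) - 1)
        (genPolyP1 p I)).natDegree = p ^ 2 - p + 1 := by
  have hp1 : p - 1 + 1 = p := Nat.sub_add_cancel hp.out.one_le
  have hple : p ≤ p ^ 2 := Nat.le_self_pow two_ne_zero p
  have hX1 : (X - 1 : (ZMod p)[X]) = X - C 1 := by rw [C_1]
  have hprime : Prime (X - 1 : (ZMod p)[X]) := by rw [hX1]; exact prime_X_sub_C 1
  have hcard : ¬ (X - 1 : (ZMod p)[X]) ∣ (#I : (ZMod p)[X]) := by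
    rw [hX1, dvd_iff_isRoot, IsRoot, eval_natCast, ZMod.natCast_eq_zero_iff]
    exact Nat.not_dvd_of_pos_of_lt (card_pos.mpr hIne) (by omega)
  obtain ⟨hdvd, hndvd⟩ := pow_dvd_and_not_pow_succ_dvd_of_pow_succ_dvd_sub hprime.ne_zero hcard
    (by rw [hp1]; exact X_sub_one_pow_dvd_genPolyP1_sub hI)
  have hgcd := EuclideanDomain.gcd_prime_pow_associated hprime (n := p ^ 2)
    ((Nat.sub_le p 1).trans hple) hdvd hndvd
  refine ⟨hdvd, by rwa [hp1] at hndvd, ?_⟩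
  rw [← one_pow (p ^ 2), ← sub_pow_char_pow, natDegree_eq_of_degree_eq
    (degree_eq_degree_of_associated hgcd), natDegree_pow, hX1, natDegree_X_sub_C, mul_one]
  omega

theorem stmt_17 (p : ℕ) (I : Finset ℕ) [hp : Fact p.Prime] (hodd : Odd p)
    (hI : I ⊆ Finset.range p) (hIne : I.Nonempty) (hIcard : I.card ≤ (p - 1) / 2) :
    (((Polynomial.X : Polynomial (ZMod p)) - 1) ^ (p - 1) ∣ genPolyP1 p I) ∧
    (¬ ((Polynomial.X : Polynomial (ZMod p)) - 1) ^ p ∣ genPolyP1 p I) ∧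
    p ^ 2 - (EuclideanDomain.gcd ((Polynomial.X : Polynomial (ZMod p)) ^ (p ^ 2) - 1)
        (genPolyP1 p I)).natDegree = p ^ 2 - p + 1 :=
  stmt_17_general p I (hp := hp) hI hIne hIcard
end

section
/- Let p be an odd prime, 2 ≤ w ≤ p−1, and 𝓘 ⊆ {0,…,p−1} nonempty with |𝓘| ≤ (p−1)/2. Define the p²-periodic sequence (h_u) over F_p by h_u = 1 if u mod p² ∈ ∪_{l∈𝓘} D_l and h_u = 0 otherwise. Then the generating polynomial H(X) = Σ_{u<p²} h_u X^u ∈ F_p[X] satisfies H(1) = −|𝓘| ≠ 0 in F_p, and consequently the linear complexity of (h_u) over F_p equals p². -/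
/-- Generating polynomial over `F_p` of one period of the sequence `(h_u)`:
`h_u = 1` iff `gcd(u,p)=1` and `q_{p,w}(u) ∈ 𝓘`. -/
noncomputable def genPolyP (p w : ℕ) (I : Finset ℕ) : Polynomial (ZMod p) :=
  ∑ u ∈ Finset.range (p ^ 2),
    if Nat.gcd u p = 1 ∧ polyQuot p w u ∈ I then Polynomial.X ^ u else 0

/-- Binomial approximation: `(a+b)^n ≡ a^n + n a^(n-1) b (mod b²)`. -/
lemma lemA (a b : ℤ) (n : ℕ) :
    (b ^ 2 : ℤ) ∣ (a + b) ^ n - (a ^ n + n * a ^ (n - 1) * b) := by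
  induction n with
  | zero => simp
  | succ n ih =>
    obtain ⟨c, hc⟩ := ih
    refine ⟨(a + b) * c + n * a ^ (n - 1), ?_⟩
    have key : (n : ℤ) * a ^ (n - 1) * a = n * a ^ n := by
      cases n with
      | zero => simp
      | succ m => push_cast; rw [pow_succ]; ring
    simp only [Nat.add_sub_cancel]
    push_cast
    linear_combination (a + b) * hc + b * key

lemma dvdN (p w u : ℕ) [hp : Fact p.Prime] :
    (p : ℤ) ∣ ((u : ℤ) ^ w - (u : ℤ) ^ (w * p)) := by
  have : (((u : ℤ) ^ w - (u : ℤ) ^ (w * p) : ℤ) : ZMod p) = 0 := by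
    push_cast
    rw [mul_comm w p, pow_mul, ZMod.pow_card, sub_self]
  exact_mod_cast (ZMod.intCast_zmod_eq_zero_iff_dvd _ p).mp this

lemma cast_polyQuot (p w u : ℕ) (hp : 0 < p) :
    ((polyQuot p w u : ℕ) : ZMod p)
      = (((((u : ℤ) ^ w - (u : ℤ) ^ (w * p)) / (p : ℤ)) : ℤ) : ZMod p) := by
  unfold polyQuot
  set x : ℤ := ((u : ℤ) ^ w - (u : ℤ) ^ (w * p)) / (p : ℤ) with hx
  have hp' : (0 : ℤ) < p := by exact_mod_cast hp
  have h1 := Int.emod_nonneg x (ne_of_gt hp')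
  have h2 : (((x % (p : ℤ)).toNat : ℕ) : ZMod p) = (((x % (p : ℤ)) : ℤ) : ZMod p) := by
    rw [← Int.cast_natCast, Int.toNat_of_nonneg h1]
  rw [h2, ZMod.intCast_mod]

/-- Key affine formula for `polyQuot` along the fiber `v + p t`. -/
lemma polyQuot_affine (p w v t : ℕ) [hp : Fact p.Prime] :
    ((polyQuot p w (v + p * t) : ℕ) : ZMod p)
      = (polyQuot p w v : ZMod p)
        + (w : ZMod p) * (v : ZMod p) ^ (w - 1) * (t : ZMod p) := by
  have hppos : 0 < p := hp.out.pos
  have hp0 : ((p : ℤ)) ≠ 0 := by exact_mod_cast hp.out.pos.ne'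
  set u : ℕ := v + p * t with hudef
  have hu : (u : ℤ) = (v : ℤ) + (p : ℤ) * t := by push_cast [hudef]; ring
  have hb2 : ((p : ℤ) ^ 2) ∣ ((p : ℤ) * t) ^ 2 := ⟨(t : ℤ) ^ 2, by rw [mul_pow]⟩
  have h1 : ((p : ℤ) ^ 2) ∣ ((u : ℤ) ^ w - ((v : ℤ) ^ w + w * (v : ℤ) ^ (w - 1) * ((p : ℤ) * t))) := by
    rw [hu]; exact hb2.trans (lemA (v : ℤ) ((p : ℤ) * t) w)
  have h2 : ((p : ℤ) ^ 2) ∣ ((u : ℤ) ^ (w * p)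
      - ((v : ℤ) ^ (w * p) + (w * p : ℕ) * (v : ℤ) ^ (w * p - 1) * ((p : ℤ) * t))) := by
    rw [hu]; exact hb2.trans (lemA (v : ℤ) ((p : ℤ) * t) (w * p))
  have h3 : ((p : ℤ) ^ 2) ∣ ((w * p : ℕ) : ℤ) * (v : ℤ) ^ (w * p - 1) * ((p : ℤ) * t) :=
    ⟨(w : ℤ) * (v : ℤ) ^ (w * p - 1) * t, by push_cast; ring⟩
  have h4 : ((p : ℤ) ^ 2) ∣ ((u : ℤ) ^ (w * p) - (v : ℤ) ^ (w * p)) := by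
    obtain ⟨c, hc⟩ := h2
    obtain ⟨d, hd⟩ := h3
    exact ⟨c + d, by linear_combination hc + hd⟩
  -- p² divides N(u) - N(v) - w v^(w-1) (p t)
  have hN : ((p : ℤ) ^ 2) ∣ (((u : ℤ) ^ w - (u : ℤ) ^ (w * p))
      - ((v : ℤ) ^ w - (v : ℤ) ^ (w * p))
      - (w : ℤ) * (v : ℤ) ^ (w - 1) * ((p : ℤ) * t)) := by
    obtain ⟨c, hc⟩ := h1
    obtain ⟨d, hd⟩ := h4
    exact ⟨c - d, by linear_combination hc - hd⟩
  set Qu : ℤ := ((u : ℤ) ^ w - (u : ℤ) ^ (w * p)) / (p : ℤ) with hQu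
  set Qv : ℤ := ((v : ℤ) ^ w - (v : ℤ) ^ (w * p)) / (p : ℤ) with hQv
  have eu : (p : ℤ) * Qu = (u : ℤ) ^ w - (u : ℤ) ^ (w * p) :=
    Int.mul_ediv_cancel' (dvdN p w u)
  have ev : (p : ℤ) * Qv = (v : ℤ) ^ w - (v : ℤ) ^ (w * p) :=
    Int.mul_ediv_cancel' (dvdN p w v)
  have hpA : (p : ℤ) * (Qu - Qv - (w : ℤ) * (v : ℤ) ^ (w - 1) * t)
      = (((u : ℤ) ^ w - (u : ℤ) ^ (w * p)) - ((v : ℤ) ^ w - (v : ℤ) ^ (w * p))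
        - (w : ℤ) * (v : ℤ) ^ (w - 1) * ((p : ℤ) * t)) := by
    linear_combination eu - ev
  have hdvd : (p : ℤ) ∣ (Qu - Qv - (w : ℤ) * (v : ℤ) ^ (w - 1) * t) := by
    have h5 : (p : ℤ) * (p : ℤ) ∣ (p : ℤ) * (Qu - Qv - (w : ℤ) * (v : ℤ) ^ (w - 1) * t) := by
      rw [hpA, ← sq]; exact hN
    exact (mul_dvd_mul_iff_left hp0).mp h5
  have h0 : ((Qu - Qv - (w : ℤ) * (v : ℤ) ^ (w - 1) * t : ℤ) : ZMod p) = 0 :=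
    (ZMod.intCast_zmod_eq_zero_iff_dvd _ p).mpr hdvd
  push_cast at h0
  rw [cast_polyQuot p w u hppos, cast_polyQuot p w v hppos, ← hQu, ← hQv]
  linear_combination h0

lemma fiber_count (p w v : ℕ) [hp : Fact p.Prime] (hw2 : 2 ≤ w) (hwp : w ≤ p - 1)
    (I : Finset ℕ) (hI : I ⊆ Finset.range p) (hv : 0 < v) (hvp : v < p) :
    ((Finset.range p).filter (fun t => polyQuot p w (v + p * t) ∈ I)).card = I.card := by
  have hppos : 0 < p := hp.out.pos
  have hvz : (v : ZMod p) ≠ 0 := by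
    rw [Ne, ZMod.natCast_eq_zero_iff]
    intro h
    exact absurd (Nat.le_of_dvd hv h) (not_le.mpr hvp)
  have hwz : (w : ZMod p) ≠ 0 := by
    rw [Ne, ZMod.natCast_eq_zero_iff]
    intro h
    have := Nat.le_of_dvd (by omega) h
    omega
  have hs : (w : ZMod p) * (v : ZMod p) ^ (w - 1) ≠ 0 :=
    mul_ne_zero hwz (pow_ne_zero _ hvz)
  set g : ℕ → ℕ := fun t => polyQuot p w (v + p * t) with hg
  have hinj : Set.InjOn g (Finset.range p) := by
    intro t1 ht1 t2 ht2 h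
    simp only [Finset.coe_range, Set.mem_Iio] at ht1 ht2
    have h1 := polyQuot_affine p w v t1
    have h2 := polyQuot_affine p w v t2
    simp only [hg] at h
    rw [h] at h1
    have h3 : (w : ZMod p) * (v : ZMod p) ^ (w - 1) * (t1 : ZMod p)
        = (w : ZMod p) * (v : ZMod p) ^ (w - 1) * (t2 : ZMod p) := by
      linear_combination h2 - h1
    have h4 : (t1 : ZMod p) = (t2 : ZMod p) := mul_left_cancel₀ hs h3
    have := congrArg ZMod.val h4
    rwa [ZMod.val_cast_of_lt ht1, ZMod.val_cast_of_lt ht2] at this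
  have himg : (Finset.range p).image g = Finset.range p := by
    apply Finset.eq_of_subset_of_card_le
    · intro x hx
      obtain ⟨t, _, rfl⟩ := Finset.mem_image.mp hx
      exact Finset.mem_range.mpr (polyQuot_lt p w _ hppos)
    · rw [Finset.card_image_of_injOn hinj, Finset.card_range]
  apply Finset.card_bij (fun t _ => g t)
  · intro t ht
    exact (Finset.mem_filter.mp ht).2
  · intro t1 ht1 t2 ht2 h
    exact hinj (Finset.mem_coe.mpr (Finset.mem_filter.mp ht1).1)
      (Finset.mem_coe.mpr (Finset.mem_filter.mp ht2).1) h
  · intro l hl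
    have : l ∈ (Finset.range p).image g := by rw [himg]; exact hI hl
    obtain ⟨t, ht, rfl⟩ := Finset.mem_image.mp this
    exact ⟨t, Finset.mem_filter.mpr ⟨ht, hl⟩, rfl⟩

lemma total_count (p w : ℕ) [hp : Fact p.Prime] (hw2 : 2 ≤ w) (hwp : w ≤ p - 1)
    (I : Finset ℕ) (hI : I ⊆ Finset.range p) :
    ((Finset.range (p ^ 2)).filter
      (fun u => Nat.gcd u p = 1 ∧ polyQuot p w u ∈ I)).card = (p - 1) * I.card := by
  have hppos : 0 < p := hp.out.pos
  have hp2 : 2 ≤ p := hp.out.two_le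
  set cond : ℕ → Prop := fun u => Nat.gcd u p = 1 ∧ polyQuot p w u ∈ I with hcond
  have step1 : ((Finset.range (p ^ 2)).filter cond).card
      = (((Finset.range p) ×ˢ (Finset.range p)).filter
          (fun vt => cond (vt.1 + p * vt.2))).card := by
    apply Finset.card_bij (fun u _ => (u % p, u / p))
    · intro u hu
      simp only [Finset.mem_filter, Finset.mem_range, pow_two] at hu
      refine Finset.mem_filter.mpr ⟨Finset.mem_product.mpr ⟨?_, ?_⟩, ?_⟩
      · exact Finset.mem_range.mpr (Nat.mod_lt _ hppos)
      · exact Finset.mem_range.mpr (Nat.div_lt_iff_lt_mul hppos |>.mpr (by omega))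
      · simpa [Nat.mod_add_div] using hu.2
    · intro u1 h1 u2 h2 h
      simp only [Prod.mk.injEq] at h
      calc u1 = u1 % p + p * (u1 / p) := (Nat.mod_add_div _ _).symm
        _ = u2 % p + p * (u2 / p) := by rw [h.1, h.2]
        _ = u2 := Nat.mod_add_div _ _
    · intro vt hvt
      simp only [Finset.mem_filter, Finset.mem_product, Finset.mem_range] at hvt
      obtain ⟨⟨hv, ht⟩, hc⟩ := hvt
      refine ⟨vt.1 + p * vt.2, Finset.mem_filter.mpr ⟨Finset.mem_range.mpr ?_, hc⟩, ?_⟩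
      · calc vt.1 + p * vt.2 < p + p * vt.2 := Nat.add_lt_add_right hv _
          _ = p * (vt.2 + 1) := by ring
          _ ≤ p * p := Nat.mul_le_mul_left p (by omega)
          _ = p ^ 2 := (sq p).symm
      · have h1 : (vt.1 + p * vt.2) % p = vt.1 := by
          rw [Nat.add_mul_mod_self_left, Nat.mod_eq_of_lt hv]
        have h2 : (vt.1 + p * vt.2) / p = vt.2 := by
          rw [Nat.add_mul_div_left _ _ hppos, Nat.div_eq_of_lt hv, zero_add]
        rw [h1, h2]
  rw [step1]
  have step2 : (((Finset.range p) ×ˢ (Finset.range p)).filter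
      (fun vt => cond (vt.1 + p * vt.2))).card
      = ∑ v ∈ Finset.range p, ((Finset.range p).filter (fun t => cond (v + p * t))).card := by
    classical
    rw [Finset.card_filter, Finset.sum_product]
    congr 1
    ext v
    rw [Finset.card_filter]
  rw [step2]
  have step3 : ∀ v ∈ Finset.range p,
      ((Finset.range p).filter (fun t => cond (v + p * t))).card
      = if v = 0 then 0 else I.card := by
    intro v hv
    rw [Finset.mem_range] at hv
    by_cases hv0 : v = 0
    · subst hv0
      rw [if_pos rfl, Finset.card_eq_zero, Finset.filter_eq_empty_iff]
      intro t _
      rw [hcond]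
      rintro ⟨hgcd, -⟩
      have : p ∣ Nat.gcd (0 + p * t) p := Nat.dvd_gcd ⟨t, by ring⟩ dvd_rfl
      rw [hgcd] at this
      exact absurd (Nat.le_of_dvd one_pos this) (by omega)
    · rw [if_neg hv0]
      have hgcd : ∀ t : ℕ, Nat.gcd (v + p * t) p = 1 := by
        intro t
        have hnd : ¬ p ∣ (v + p * t) := by
          rw [add_comm, Nat.dvd_add_right ⟨t, rfl⟩]
          intro h
          exact absurd (Nat.le_of_dvd (by omega) h) (by omega)
        have := (Nat.Prime.coprime_iff_not_dvd hp.out).mpr hnd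
        exact Nat.coprime_comm.mp this
      have heq : (Finset.range p).filter (fun t => cond (v + p * t))
          = (Finset.range p).filter (fun t => polyQuot p w (v + p * t) ∈ I) := by
        apply Finset.filter_congr
        intro t _
        rw [hcond]
        simp [hgcd t]
      rw [heq]
      exact fiber_count p w v hw2 hwp I hI (by omega) hv
  rw [Finset.sum_congr rfl step3]
  have hsplit : p = (p - 1) + 1 := by omega
  rw [hsplit, Finset.sum_range_succ']
  simp [Finset.sum_const, Finset.card_range]

theorem stmt_18 (p w : ℕ) (I : Finset ℕ) [hp : Fact p.Prime] (hodd : Odd p)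
    (hw2 : 2 ≤ w) (hwp : w ≤ p - 1)
    (hI : I ⊆ Finset.range p) (hIne : I.Nonempty) (hIcard : I.card ≤ (p - 1) / 2) :
    (genPolyP p w I).eval 1 = -(I.card : ZMod p) ∧
    (genPolyP p w I).eval 1 ≠ 0 ∧
    p ^ 2 - (EuclideanDomain.gcd ((Polynomial.X : Polynomial (ZMod p)) ^ (p ^ 2) - 1)
        (genPolyP p w I)).natDegree = p ^ 2 := by
  classical
  have hppos : 0 < p := hp.out.pos
  have hp2 : 2 ≤ p := hp.out.two_le
  -- evaluate at 1
  have heval : (genPolyP p w I).eval 1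
      = (((Finset.range (p ^ 2)).filter
          (fun u => Nat.gcd u p = 1 ∧ polyQuot p w u ∈ I)).card : ZMod p) := by
    rw [genPolyP, Polynomial.eval_finset_sum]
    simp only [apply_ite (Polynomial.eval (1 : ZMod p)), Polynomial.eval_pow,
      Polynomial.eval_X, one_pow, Polynomial.eval_zero]
    rw [Finset.sum_boole]
  rw [heval, total_count p w hw2 hwp I hI]
  have hcast : (((p - 1) * I.card : ℕ) : ZMod p) = -(I.card : ZMod p) := by
    have h1 : ((p - 1 : ℕ) : ZMod p) = -1 := by
      have : ((p - 1 : ℕ) : ZMod p) = (p : ZMod p) - 1 := by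
        push_cast [Nat.cast_sub (by omega : 1 ≤ p)]
        ring
      rw [this, ZMod.natCast_self]
      ring
    push_cast
    rw [h1]
    ring
  have hne : -(I.card : ZMod p) ≠ 0 := by
    rw [neg_ne_zero, Ne, ZMod.natCast_eq_zero_iff]
    intro h
    have h1 : 0 < I.card := Finset.card_pos.mpr hIne
    have := Nat.le_of_dvd h1 h
    omega
  refine ⟨hcast, hcast ▸ hne, ?_⟩
  -- the gcd is a unit
  have hXpow : (Polynomial.X : Polynomial (ZMod p)) ^ (p ^ 2) - 1
      = ((Polynomial.X : Polynomial (ZMod p)) - 1) ^ (p ^ 2) := by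
    rw [sub_pow_char_pow (R := Polynomial (ZMod p)), one_pow]
  have hnd : ¬ ((Polynomial.X : Polynomial (ZMod p)) - Polynomial.C 1) ∣ genPolyP p w I := by
    rw [Polynomial.dvd_iff_isRoot]
    intro h
    rw [Polynomial.IsRoot] at h
    rw [heval, total_count p w hw2 hwp I hI, hcast] at h
    exact hne h
  have hcop : IsCoprime ((Polynomial.X : Polynomial (ZMod p)) - Polynomial.C 1)
      (genPolyP p w I) :=
    ((Polynomial.irreducible_X_sub_C (1 : ZMod p)).coprime_iff_not_dvd).mpr hnd
  have hunit : IsUnit (EuclideanDomain.gcd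
      ((Polynomial.X : Polynomial (ZMod p)) ^ (p ^ 2) - 1) (genPolyP p w I)) := by
    rw [EuclideanDomain.gcd_isUnit_iff]
    rw [hXpow]
    have : (Polynomial.X : Polynomial (ZMod p)) - 1
        = (Polynomial.X : Polynomial (ZMod p)) - Polynomial.C 1 := by rw [map_one]
    rw [this]
    exact hcop.pow_left
  rw [Polynomial.natDegree_eq_zero_of_isUnit hunit, Nat.sub_zero]
end
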